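/- arXiv:2010.08828 — 5 statements merged into one kernel-verified Lean document; each statement's English description precedes it below -/
import Mathlib

section
/- Let G be a finite simple graph on n vertices with a magnetic potential α, and let G' = G - e₀ be the graph obtained from G by deleting a single edge e₀, with α' the restriction of α to the arcs of G'. Then the eigenvalues interlace: λ_k(Δ_{α'}^{G'}) ≤ λ_k(Δ_α^G) for all 1 ≤ k ≤ n, and λ_k(Δ_α^G) ≤ λ_{k+1}(Δ_{α'}^{G'}) for all 1 ≤ k ≤ n-1. -/
/-!
Deleting the edge `uv` lowers the magnetic Laplacian by the rank-one positive semidefinite matrix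
`w wᴴ`, where `w = e_u - e^{iα(v,u)} e_v`. Both inequalities then follow from a Courant–Fischer
argument: if the quadratic form of `B` is at most that of `A` on a subspace `V`, then the span of
the first `j + 1` eigenvectors of `A`, the span of the last `n - i` eigenvectors of `B` and `V`
share a nonzero vector as soon as `n + i ≤ dim V + j`, and evaluating both forms on it gives
`λ_i(B) ≤ λ_j(A)`. Taking `V` to be the whole space gives `λ_k(G - e₀) ≤ λ_k(G)`; taking `V = w⊥`,
on which the two forms agree, gives `λ_k(G) ≤ λ_{k+1}(G - e₀)`.
-/

open Classical in
/-- The discrete magnetic Laplacian of a simple graph `G` on `Fin n` with magnetic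
potential `α`. -/
noncomputable def magLap {n : ℕ} (G : SimpleGraph (Fin n)) (α : Fin n → Fin n → ℝ) :
    Matrix (Fin n) (Fin n) ℂ :=
  Matrix.of fun u v =>
    if u = v then ((G.neighborSet u).ncard : ℂ)
    else if G.Adj u v then -Complex.exp (α u v * Complex.I) else 0

lemma magLap_isHermitian {n : ℕ} (G : SimpleGraph (Fin n)) (α : Fin n → Fin n → ℝ)
    (hα : ∀ u v, α v u = -α u v) : (magLap G α).IsHermitian := by
  rw [Matrix.IsHermitian]
  ext u v
  simp only [Matrix.conjTranspose_apply, magLap, Matrix.of_apply]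
  by_cases huv : u = v
  · subst huv; simp
  · have hvu : ¬ v = u := fun h => huv h.symm
    rw [if_neg hvu, if_neg huv]
    by_cases hadj : G.Adj u v
    · rw [if_pos hadj.symm, if_pos hadj, star_neg]
      have h1 : star (Complex.exp ((α v u : ℂ) * Complex.I)) =
          Complex.exp ((starRingEnd ℂ) ((α v u : ℂ) * Complex.I)) :=
        (Complex.exp_conj _).symm
      rw [h1]
      congr 1
      rw [hα u v]
      simp [map_mul, Complex.conj_ofReal, Complex.conj_I]
    · rw [if_neg (fun h => hadj h.symm), if_neg hadj, star_zero]

/-- The `k`-th smallest eigenvalue (1-indexed, with multiplicity) of a Hermitian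
matrix, as an extended real number; `⊥` for `k = 0` and `⊤` for `k > n`. -/
noncomputable def lamb {n : ℕ} {A : Matrix (Fin n) (Fin n) ℂ} (hA : A.IsHermitian) (k : ℕ) :
    EReal :=
  if h : 1 ≤ k ∧ k ≤ n then
    (((hA.eigenvalues ∘ Tuple.sort hA.eigenvalues) ⟨k - 1, by omega⟩ : ℝ) : EReal)
  else if k = 0 then ⊥ else ⊤

/-- The matching number of a graph: the maximal number of pairwise independent edges. -/
noncomputable def matchingNumber {n : ℕ} (G : SimpleGraph (Fin n)) : ℕ :=
  sSup {k : ℕ | ∃ M : G.Subgraph, M.IsMatching ∧ M.edgeSet.ncard = k}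

open Module Submodule

theorem Submodule.finrank_add_finrank_le_finrank_add_finrank_inf {K V : Type*} [DivisionRing K]
    [AddCommGroup V] [Module K V] [FiniteDimensional K V] (s t : Submodule K V) :
    finrank K s + finrank K t ≤ finrank K V + finrank K ↥(s ⊓ t) := by
  rw [← finrank_sup_add_finrank_inf_eq]
  exact Nat.add_le_add_right (finrank_le _) _

theorem Module.Basis.finrank_span_image {ι K V : Type*} [DivisionRing K]
    [AddCommGroup V] [Module K V] (b : Basis ι K V) (s : Finset ι) :
    finrank K (span K (b '' s)) = s.card := by
  rw [Set.image_eq_range]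
  exact (finrank_span_eq_card
    (b.linearIndependent.comp ((↑) : s → ι) Subtype.val_injective)).trans (by simp)

namespace OrthonormalBasis

variable {𝕜 E ι : Type*} [RCLike 𝕜] [NormedAddCommGroup E] [InnerProductSpace 𝕜 E] [Fintype ι]
  {T : E →ₗ[𝕜] E} {b : OrthonormalBasis ι 𝕜 E} {μ : ι → ℝ}

theorem re_inner_apply_self_eq_sum (hT : ∀ i, T (b i) = (μ i : 𝕜) • b i) (x : E) :
    RCLike.re (inner 𝕜 x (T x)) = ∑ i, μ i * ‖b.repr x i‖ ^ 2 := by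
  have hTx : T x = ∑ i, (μ i * b.repr x i : 𝕜) • b i := by
    conv_lhs => rw [← b.sum_repr x]
    simp [hT, smul_smul, mul_comm]
  rw [hTx, inner_sum, map_sum]
  refine Finset.sum_congr rfl fun i _ => ?_
  rw [inner_smul_right, ← inner_conj_symm, ← b.repr_apply_apply, mul_assoc, RCLike.mul_conj]
  norm_cast

theorem repr_eq_zero_of_mem_span_image {s : Set ι} {x : E} (hx : x ∈ span 𝕜 (b '' s)) {i : ι}
    (hi : i ∉ s) : b.repr x i = 0 := by
  rw [← b.coe_toBasis, Basis.mem_span_image] at hx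
  rw [← b.coe_toBasis_repr_apply]
  by_contra h
  exact hi (hx (Finsupp.mem_support_iff.mpr h))

variable [Preorder ι]

theorem re_inner_apply_self_le_of_mem_span (hT : ∀ i, T (b i) = (μ i : 𝕜) • b i)
    (hμ : Monotone μ) {k : ι} {x : E} (hx : x ∈ span 𝕜 (b '' Set.Iic k)) :
    RCLike.re (inner 𝕜 x (T x)) ≤ μ k * ‖x‖ ^ 2 := by
  rw [re_inner_apply_self_eq_sum hT, ← b.sum_sq_norm_inner_right, Finset.mul_sum]
  refine Finset.sum_le_sum fun i _ => ?_
  rw [← b.repr_apply_apply]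
  by_cases hi : i ≤ k
  · exact mul_le_mul_of_nonneg_right (hμ hi) (by positivity)
  · simp [repr_eq_zero_of_mem_span_image hx hi]

theorem le_re_inner_apply_self_of_mem_span (hT : ∀ i, T (b i) = (μ i : 𝕜) • b i)
    (hμ : Monotone μ) {k : ι} {x : E} (hx : x ∈ span 𝕜 (b '' Set.Ici k)) :
    μ k * ‖x‖ ^ 2 ≤ RCLike.re (inner 𝕜 x (T x)) := by
  rw [re_inner_apply_self_eq_sum hT, ← b.sum_sq_norm_inner_right, Finset.mul_sum]
  refine Finset.sum_le_sum fun i _ => ?_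
  rw [← b.repr_apply_apply]
  by_cases hi : k ≤ i
  · exact mul_le_mul_of_nonneg_right (hμ hi) (by positivity)
  · simp [repr_eq_zero_of_mem_span_image hx hi]

end OrthonormalBasis

open OrthonormalBasis in
theorem eigenvalue_le_of_re_inner_le_on {𝕜 E : Type*} [RCLike 𝕜] [NormedAddCommGroup E]
    [InnerProductSpace 𝕜 E] {n : ℕ} {A B : E →ₗ[𝕜] E} {bA bB : OrthonormalBasis (Fin n) 𝕜 E}
    {μA μB : Fin n → ℝ} (hA : ∀ i, A (bA i) = (μA i : 𝕜) • bA i)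
    (hB : ∀ i, B (bB i) = (μB i : 𝕜) • bB i) (hμA : Monotone μA) (hμB : Monotone μB)
    {V : Submodule 𝕜 E} (hV : ∀ x ∈ V, RCLike.re (inner 𝕜 x (B x)) ≤ RCLike.re (inner 𝕜 x (A x)))
    {i j : Fin n} (hij : n + i ≤ finrank 𝕜 V + j) : μB i ≤ μA j := by
  have := Module.Finite.of_basis bA.toBasis
  set P := span 𝕜 (bA '' Set.Iic j) with hPdef
  set Q := span 𝕜 (bB '' Set.Ici i) with hQdef
  have hE : finrank 𝕜 E = n := by simpa using finrank_eq_card_basis bA.toBasis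
  have hP : finrank 𝕜 P = j + 1 := by
    rw [hPdef, ← Finset.coe_Iic, ← bA.coe_toBasis, Basis.finrank_span_image, Fin.card_Iic]
  have hQ : finrank 𝕜 Q = n - i := by
    rw [hQdef, ← Finset.coe_Ici, ← bB.coe_toBasis, Basis.finrank_span_image, Fin.card_Ici]
  have hPV := finrank_add_finrank_le_finrank_add_finrank_inf P V
  have hPVQ := finrank_add_finrank_le_finrank_add_finrank_inf (P ⊓ V) Q
  have hne : P ⊓ V ⊓ Q ≠ ⊥ := by
    intro h
    rw [h, finrank_bot] at hPVQ
    omega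
  obtain ⟨x, ⟨⟨hxP, hxV⟩, hxQ⟩, hx⟩ := exists_mem_ne_zero_of_ne_bot hne
  have key : μB i * ‖x‖ ^ 2 ≤ μA j * ‖x‖ ^ 2 :=
    calc μB i * ‖x‖ ^ 2 ≤ RCLike.re (inner 𝕜 x (B x)) :=
          le_re_inner_apply_self_of_mem_span hB hμB hxQ
      _ ≤ RCLike.re (inner 𝕜 x (A x)) := hV x hxV
      _ ≤ μA j * ‖x‖ ^ 2 := re_inner_apply_self_le_of_mem_span hA hμA hxP
  exact le_of_mul_le_mul_right key (by positivity)

theorem Matrix.IsHermitian.toEuclideanLin_eigenvectorBasis {𝕜 ι : Type*} [RCLike 𝕜] [Fintype ι]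
    [DecidableEq ι] {A : Matrix ι ι 𝕜} (hA : A.IsHermitian) (j : ι) :
    Matrix.toEuclideanLin A (hA.eigenvectorBasis j) =
      (hA.eigenvalues j : 𝕜) • hA.eigenvectorBasis j := by
  rw [Matrix.toLpLin_apply, hA.mulVec_eigenvectorBasis, ← RCLike.real_smul_eq_coe_smul]
  rfl

theorem re_inner_toEuclideanLin_vecMulVec {𝕜 ι : Type*} [RCLike 𝕜] [Fintype ι] [DecidableEq ι]
    (w x : EuclideanSpace 𝕜 ι) :
    RCLike.re (inner 𝕜 x (Matrix.toEuclideanLin (Matrix.vecMulVec w (star w)) x)) =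
      ‖inner 𝕜 w x‖ ^ 2 := by
  rw [← InnerProductSpace.symm_toEuclideanLin_rankOne, LinearEquiv.apply_symm_apply,
    ContinuousLinearMap.coe_coe, InnerProductSpace.rankOne_apply, inner_smul_right,
    ← inner_conj_symm, RCLike.conj_mul, RCLike.norm_conj]
  norm_cast

theorem lamb_le_lamb_of_re_inner_le_on {n : ℕ} {A B : Matrix (Fin n) (Fin n) ℂ}
    (hA : A.IsHermitian) (hB : B.IsHermitian) {V : Submodule ℂ (EuclideanSpace ℂ (Fin n))}
    (hV : ∀ x ∈ V, RCLike.re (inner ℂ x (Matrix.toEuclideanLin B x)) ≤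
      RCLike.re (inner ℂ x (Matrix.toEuclideanLin A x)))
    {i j : ℕ} (hi : 1 ≤ i) (hj : j ≤ n) (hij : n + i ≤ finrank ℂ V + j) :
    lamb hB i ≤ lamb hA j := by
  have hVn : finrank ℂ V ≤ n := (finrank_le V).trans_eq finrank_euclideanSpace_fin
  have sorted_eigen {M : Matrix (Fin n) (Fin n) ℂ} (hM : M.IsHermitian) (k : Fin n) :
      Matrix.toEuclideanLin M (hM.eigenvectorBasis.reindex (Tuple.sort hM.eigenvalues).symm k) =
        ((hM.eigenvalues ∘ Tuple.sort hM.eigenvalues) k : ℂ) •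
          hM.eigenvectorBasis.reindex (Tuple.sort hM.eigenvalues).symm k := by
    rw [OrthonormalBasis.reindex_apply, Equiv.symm_symm]
    exact hM.toEuclideanLin_eigenvectorBasis _
  rw [lamb, lamb, dif_pos ⟨hi, by omega⟩, dif_pos ⟨by omega, hj⟩, EReal.coe_le_coe_iff]
  exact eigenvalue_le_of_re_inner_le_on (sorted_eigen hA) (sorted_eigen hB)
    (Tuple.monotone_sort hA.eigenvalues) (Tuple.monotone_sort hB.eigenvalues) hV
    (by simp only; omega)

theorem lamb_interlace_of_eq_add_vecMulVec {n : ℕ} {A B : Matrix (Fin n) (Fin n) ℂ}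
    (hA : A.IsHermitian) (hB : B.IsHermitian) (w : EuclideanSpace ℂ (Fin n))
    (hBA : B = A + Matrix.vecMulVec w (star w)) :
    (∀ k : ℕ, 1 ≤ k → k ≤ n → lamb hA k ≤ lamb hB k) ∧
    (∀ k : ℕ, 1 ≤ k → k ≤ n - 1 → lamb hB k ≤ lamb hA (k + 1)) := by
  have hquad (x : EuclideanSpace ℂ (Fin n)) :
      RCLike.re (inner ℂ x (Matrix.toEuclideanLin B x)) =
        RCLike.re (inner ℂ x (Matrix.toEuclideanLin A x)) + ‖inner ℂ w x‖ ^ 2 := by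
    rw [hBA, map_add, LinearMap.add_apply, inner_add_right, map_add,
      re_inner_toEuclideanLin_vecMulVec]
  have hcodim : n ≤ finrank ℂ (ℂ ∙ w)ᗮ + 1 := by
    have := (ℂ ∙ w).finrank_add_finrank_orthogonal
    have := finrank_span_le_card (R := ℂ) ({w} : Set (EuclideanSpace ℂ (Fin n)))
    simp only [finrank_euclideanSpace_fin, Set.toFinset_singleton, Finset.card_singleton] at *
    omega
  refine ⟨fun k hk hkn => lamb_le_lamb_of_re_inner_le_on hB hA (V := ⊤) ?_ hk hkn (by simp),
    fun k hk hkn => lamb_le_lamb_of_re_inner_le_on hA hB (V := (ℂ ∙ w)ᗮ) ?_ hk (by omega)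
      (by omega)⟩
  · intro x _
    rw [hquad]
    exact le_add_of_nonneg_right (by positivity)
  · intro x hx
    rw [hquad, Submodule.mem_orthogonal_singleton_iff_inner_right.mp hx]
    simp

namespace SimpleGraph
variable {V : Type*} (G : SimpleGraph V) {u v : V}

theorem neighborSet_deleteEdges_edge_of_ne {i : V} (hu : i ≠ u) (hv : i ≠ v) :
    (G.deleteEdges {s(u, v)}).neighborSet i = G.neighborSet i := by
  ext x
  simp [hu, hv]

theorem ncard_neighborSet_deleteEdges_edge_add_one [Finite V] (h : G.Adj u v) :
    ((G.deleteEdges {s(u, v)}).neighborSet u).ncard + 1 = (G.neighborSet u).ncard := by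
  have : (G.deleteEdges {s(u, v)}).neighborSet u = G.neighborSet u \ {v} := by
    ext x
    simp [h.ne]
  rw [this]
  exact Set.ncard_sdiff_singleton_add_one h (Set.toFinite _)

end SimpleGraph

noncomputable def magEdgeVector {n : ℕ} (α : Fin n → Fin n → ℝ) (u v : Fin n) :
    EuclideanSpace ℂ (Fin n) :=
  EuclideanSpace.single u 1 - EuclideanSpace.single v (Complex.exp (α v u * Complex.I))

theorem magEdgeVector_apply_of_ne {n : ℕ} (α : Fin n → Fin n → ℝ) {u v i : Fin n} (hu : i ≠ u)
    (hv : i ≠ v) : magEdgeVector α u v i = 0 := by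
  simp [magEdgeVector, hu, hv]

theorem magLap_eq_magLap_deleteEdges_add {n : ℕ} (G : SimpleGraph (Fin n))
    {α : Fin n → Fin n → ℝ} (hα : ∀ u v, α v u = -α u v) {u v : Fin n} (h : G.Adj u v) :
    magLap G α = magLap (G.deleteEdges {s(u, v)}) α +
      Matrix.vecMulVec (magEdgeVector α u v) (star (magEdgeVector α u v)) := by
  have huv := h.ne
  have hconj :
      starRingEnd ℂ (Complex.exp (α v u * Complex.I)) = Complex.exp (α u v * Complex.I) := by
    rw [← Complex.exp_conj, hα]; simp
  ext i j
  simp only [magLap, Matrix.of_apply, Matrix.add_apply, Matrix.vecMulVec_apply, Pi.star_apply]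
  by_cases hij : i = j
  · subst hij
    rcases eq_or_ne i u with rfl | hiu
    · simp [magEdgeVector, huv, ← G.ncard_neighborSet_deleteEdges_edge_add_one h]
    rcases eq_or_ne i v with rfl | hiv
    · simp [magEdgeVector, huv.symm, Sym2.eq_swap, Complex.mul_conj',
        Complex.norm_exp_ofReal_mul_I, ← G.ncard_neighborSet_deleteEdges_edge_add_one h.symm]
    · simp [magEdgeVector_apply_of_ne α hiu hiv, G.neighborSet_deleteEdges_edge_of_ne hiu hiv]
  rw [if_neg hij, if_neg hij]
  by_cases he : s(i, j) = s(u, v)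
  · rcases Sym2.eq_iff.mp he with ⟨rfl, rfl⟩ | ⟨rfl, rfl⟩
    · simp [magEdgeVector, h, huv, hconj]
    · simp [magEdgeVector, h.symm, huv, Sym2.eq_swap]
  have hw : magEdgeVector α u v i * star (magEdgeVector α u v j) = 0 := by
    by_cases hi : i = u ∨ i = v
    · have hj : j ≠ u ∧ j ≠ v := by
        rcases hi with rfl | rfl <;> refine ⟨?_, ?_⟩ <;> rintro rfl <;>
          first | exact hij rfl | exact he rfl | exact he Sym2.eq_swap
      simp [magEdgeVector_apply_of_ne α hj.1 hj.2]
    · simp [magEdgeVector_apply_of_ne α (not_or.mp hi).1 (not_or.mp hi).2]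
  have hadj : (G.deleteEdges {s(u, v)}).Adj i j ↔ G.Adj i j := by
    rw [SimpleGraph.deleteEdges_adj, Set.mem_singleton_iff, and_iff_left he]
  rw [hw, add_zero]
  by_cases hG : G.Adj i j
  · rw [if_pos hG, if_pos (hadj.mpr hG)]
  · rw [if_neg hG, if_neg (mt hadj.mp hG)]

/-- Deleting a single edge from a magnetic graph interlaces the
eigenvalues of the discrete magnetic Laplacian. -/
theorem deleteEdge_interlacing {n : ℕ} (G : SimpleGraph (Fin n))
    (α : Fin n → Fin n → ℝ) (hα : ∀ u v, α v u = -α u v)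
    (e₀ : Sym2 (Fin n)) (he₀ : e₀ ∈ G.edgeSet) :
    (∀ k : ℕ, 1 ≤ k → k ≤ n →
      lamb (magLap_isHermitian (G.deleteEdges {e₀}) α hα) k ≤
        lamb (magLap_isHermitian G α hα) k) ∧
    (∀ k : ℕ, 1 ≤ k → k ≤ n - 1 →
      lamb (magLap_isHermitian G α hα) k ≤
        lamb (magLap_isHermitian (G.deleteEdges {e₀}) α hα) (k + 1)) := by
  induction e₀ using Sym2.ind with
  | _ u v =>
    exact lamb_interlace_of_eq_add_vecMulVec _ _ (magEdgeVector α u v)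
      (magLap_eq_magLap_deleteEdges_add G hα (G.mem_edgeSet.mp he₀))
end

section
/- Let T be a tree on n vertices with matching number μ(T). Then λ_{μ(T)+1}(Δ^T) ≤ 2 ≤ λ_{n-μ(T)+1}(Δ^T), where Δ^T is the combinatorial Laplacian of T. -/
/-!
Let `M` be a maximum matching of `T`, with `μ` edges; the Laplacian quadratic form is
`∑_{uv ∈ E} |x u - x v|²`. If `x` is constant across every edge outside `M`, only matching edges
contribute, and `|a - b|² ≤ 2|a|² + 2|b|²` bounds the form by `2‖x‖²`; as a tree has `n - 1`
edges, these `x` form a space of dimension at least `n - (n - 1 - μ) = μ + 1`. If `x` vanishes off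
the matched vertices and takes opposite values at the two ends of each matching edge `uv`, that
edge alone contributes `|2 x u|² = 2|x u|² + 2|x v|²`, so the form is at least `2‖x‖²`; these `x`
form a space of dimension at least `2μ - μ = μ`. The min–max principle turns the two estimates
into `λ_{μ+1} ≤ 2` and `2 ≤ λ_{n-μ+1}`.
-/

open Module RCLike Matrix

lemma Submodule.exists_mem_inf_ne_zero_of_finrank_lt {K V : Type*} [DivisionRing K]
    [AddCommGroup V] [Module K V] [FiniteDimensional K V] {U W : Submodule K V}
    (h : finrank K V < finrank K U + finrank K W) : ∃ x ∈ U, x ∈ W ∧ x ≠ 0 := by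
  by_contra! hUW
  exact (Submodule.finrank_add_finrank_le_of_disjoint
    (Submodule.disjoint_def.mpr fun x hxU hxW => hUW x hxU hxW)).not_gt h

lemma LinearMap.finrank_le_finrank_iInf_ker_add_card {K V ι : Type*} [Field K] [AddCommGroup V]
    [Module K V] [FiniteDimensional K V] [Fintype ι] (f : ι → V →ₗ[K] K) :
    finrank K V ≤ finrank K ↥(⨅ i, LinearMap.ker (f i)) + Fintype.card ι := by
  have hrange : finrank K (LinearMap.range (LinearMap.pi f)) ≤ Fintype.card ι :=
    (Submodule.finrank_le _).trans_eq (by simp)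
  have := (LinearMap.pi f).finrank_range_add_finrank_ker
  rw [LinearMap.ker_pi] at this
  omega

namespace OrthonormalBasis

variable {𝕜 E ι : Type*} [RCLike 𝕜] [NormedAddCommGroup E] [InnerProductSpace 𝕜 E] [Fintype ι]
  {T : E →ₗ[𝕜] E} {b : OrthonormalBasis ι 𝕜 E} {d : ι → ℝ}

lemma repr_map_apply_of_apply_eq_smul (hb : ∀ i, T (b i) = (d i : 𝕜) • b i) (x : E) (i : ι) :
    b.repr (T x) i = d i * b.repr x i := by
  classical
  conv_lhs => rw [← b.sum_repr x]
  simp [hb, OrthonormalBasis.repr_self, Pi.single_apply, RCLike.real_smul_eq_coe_mul, mul_comm]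

lemma re_inner_map_self_of_apply_eq_smul (hb : ∀ i, T (b i) = (d i : 𝕜) • b i) (x : E) :
    re (inner 𝕜 x (T x)) = ∑ i, d i * ‖b.repr x i‖ ^ 2 := by
  rw [← b.repr.inner_map_map, PiLp.inner_apply, map_sum]
  refine Finset.sum_congr rfl fun i _ => ?_
  rw [repr_map_apply_of_apply_eq_smul hb, inner_apply, mul_assoc, RCLike.mul_conj]
  norm_cast

lemma norm_sq_eq_sum_norm_repr_sq (x : E) : ‖x‖ ^ 2 = ∑ i, ‖b.repr x i‖ ^ 2 := by
  rw [← b.repr.norm_map, EuclideanSpace.norm_sq_eq]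

lemma repr_apply_eq_zero_of_mem_span {s : Set ι} {x : E} (hx : x ∈ Submodule.span 𝕜 (b '' s))
    {i : ι} (hi : i ∉ s) : b.repr x i = 0 := by
  classical
  induction hx using Submodule.span_induction with
  | mem y hy =>
    obtain ⟨j, hj, rfl⟩ := hy
    rw [OrthonormalBasis.repr_self, PiLp.single_apply, if_neg (ne_of_mem_of_not_mem hj hi).symm]
  | zero => simp
  | add y z _ _ hy hz => simp [hy, hz]
  | smul c y _ hy => simp [hy]

lemma finrank_span_image (s : Finset ι) : finrank 𝕜 (Submodule.span 𝕜 (b '' s)) = s.card := by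
  have hli : LinearIndependent 𝕜 fun i : (s : Set ι) => b i :=
    b.orthonormal.linearIndependent.comp _ Subtype.val_injective
  rw [Set.image_eq_range, finrank_span_eq_card hli]
  simp

lemma le_of_forall_re_inner_map_self_le (hb : ∀ i, T (b i) = (d i : 𝕜) • b i) {s : Finset ι}
    {a c : ℝ} (hs : ∀ i ∈ s, a ≤ d i) {W : Submodule 𝕜 E}
    (hdim : finrank 𝕜 E < finrank 𝕜 W + s.card)
    (hW : ∀ x ∈ W, re (inner 𝕜 x (T x)) ≤ c * ‖x‖ ^ 2) : a ≤ c := by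
  have := b.toBasis.finiteDimensional_of_finite
  obtain ⟨x, hxW, hxs, hx⟩ := Submodule.exists_mem_inf_ne_zero_of_finrank_lt (U := W)
    (W := Submodule.span 𝕜 (b '' s)) (by rwa [finrank_span_image])
  have hlow : a * ‖x‖ ^ 2 ≤ re (inner 𝕜 x (T x)) := by
    rw [re_inner_map_self_of_apply_eq_smul hb, b.norm_sq_eq_sum_norm_repr_sq, Finset.mul_sum]
    refine Finset.sum_le_sum fun i _ => ?_
    by_cases hi : i ∈ s
    · exact mul_le_mul_of_nonneg_right (hs i hi) (by positivity)
    · simp [repr_apply_eq_zero_of_mem_span hxs (Finset.mem_coe.not.mpr hi)]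
  exact le_of_mul_le_mul_right (hlow.trans (hW x hxW)) (by positivity)

lemma le_of_forall_le_re_inner_map_self (hb : ∀ i, T (b i) = (d i : 𝕜) • b i) {s : Finset ι}
    {a c : ℝ} (hs : ∀ i ∈ s, d i ≤ a) {W : Submodule 𝕜 E}
    (hdim : finrank 𝕜 E < finrank 𝕜 W + s.card)
    (hW : ∀ x ∈ W, c * ‖x‖ ^ 2 ≤ re (inner 𝕜 x (T x))) : c ≤ a := by
  have hb' (i : ι) : (-T) (b i) = ((-d i : ℝ) : 𝕜) • b i := by simp [hb]
  have := le_of_forall_re_inner_map_self_le hb' (fun i hi => neg_le_neg (hs i hi)) hdim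
    (c := -c) fun x hx => by simpa using hW x hx
  linarith

end OrthonormalBasis

namespace Matrix.IsHermitian

variable {n : ℕ} {A : Matrix (Fin n) (Fin n) ℂ}

noncomputable def sortedEigenvectorBasis (hA : A.IsHermitian) :
    OrthonormalBasis (Fin n) ℂ (EuclideanSpace ℂ (Fin n)) :=
  hA.eigenvectorBasis.reindex (Tuple.sort hA.eigenvalues).symm

lemma toEuclideanLin_sortedEigenvectorBasis (hA : A.IsHermitian) (i : Fin n) :
    toEuclideanLin A (hA.sortedEigenvectorBasis i) =
      ((hA.eigenvalues (Tuple.sort hA.eigenvalues i) : ℝ) : ℂ) • hA.sortedEigenvectorBasis i := by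
  rw [sortedEigenvectorBasis, OrthonormalBasis.reindex_apply, Equiv.symm_symm, toLpLin_apply]
  ext1
  simp only [hA.mulVec_eigenvectorBasis, WithLp.ofLp_smul]
  rw [RCLike.real_smul_eq_coe_smul (K := ℂ)]
  rfl

lemma lamb_le_of_forall_re_inner_le (hA : A.IsHermitian) {k : ℕ} (hk : 1 ≤ k)
    {W : Submodule ℂ (EuclideanSpace ℂ (Fin n))} (hW : k ≤ finrank ℂ W) {c : ℝ}
    (hc : ∀ x ∈ W, re (inner ℂ x (toEuclideanLin A x)) ≤ c * ‖x‖ ^ 2) :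
    lamb hA k ≤ c := by
  have hkn : k ≤ n := hW.trans ((Submodule.finrank_le W).trans_eq (by simp))
  rw [lamb, dif_pos ⟨hk, hkn⟩, EReal.coe_le_coe_iff]
  refine hA.sortedEigenvectorBasis.le_of_forall_re_inner_map_self_le
    hA.toEuclideanLin_sortedEigenvectorBasis (s := Finset.Ici ⟨k - 1, by omega⟩)
    (fun i hi => Tuple.monotone_sort hA.eigenvalues (Finset.mem_Ici.mp hi)) ?_ hc
  simp only [finrank_euclideanSpace_fin, Fin.card_Ici]
  omega

lemma le_lamb_of_forall_le_re_inner (hA : A.IsHermitian) {k : ℕ} (hk : 1 ≤ k)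
    {W : Submodule ℂ (EuclideanSpace ℂ (Fin n))} (hW : n + 1 - k ≤ finrank ℂ W) {c : ℝ}
    (hc : ∀ x ∈ W, c * ‖x‖ ^ 2 ≤ re (inner ℂ x (toEuclideanLin A x))) :
    (c : EReal) ≤ lamb hA k := by
  by_cases hkn : k ≤ n
  · rw [lamb, dif_pos ⟨hk, hkn⟩, EReal.coe_le_coe_iff]
    refine hA.sortedEigenvectorBasis.le_of_forall_le_re_inner_map_self
      hA.toEuclideanLin_sortedEigenvectorBasis (s := Finset.Iic ⟨k - 1, by omega⟩)
      (fun i hi => Tuple.monotone_sort hA.eigenvalues (Finset.mem_Iic.mp hi)) ?_ hc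
    simp only [finrank_euclideanSpace_fin, Fin.card_Iic]
    omega
  · rw [lamb, dif_neg (by omega), if_neg (by omega)]
    exact le_top

end Matrix.IsHermitian

lemma Sym2.out_mk_eq_or_swap {α : Type*} (u v : α) :
    (s(u, v).out.1 = u ∧ s(u, v).out.2 = v) ∨ (s(u, v).out.1 = v ∧ s(u, v).out.2 = u) :=
  Sym2.eq_iff.mp (Quot.out_eq _)

open scoped Classical

namespace SimpleGraph

section Matching

variable {V : Type*} [Fintype V] {G : SimpleGraph V} {M : G.Subgraph}

/-- Summed over ordered pairs, so every edge counts twice: twice the Laplacian quadratic form. -/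
noncomputable def energy (G : SimpleGraph V) (x : V → ℂ) : ℝ :=
  ∑ u, ∑ v, if G.Adj u v then ‖x u - x v‖ ^ 2 else 0

namespace Subgraph.IsMatching

lemma sum_ite_adj (hM : M.IsMatching) {R : Type*} [AddCommMonoid R] (u : V) (r : R) :
    ∑ v, (if M.Adj u v then r else 0) = if u ∈ M.verts then r else 0 := by
  by_cases hu : u ∈ M.verts
  · obtain ⟨w, hw, huniq⟩ := hM hu
    have hadj : ∀ v, M.Adj u v ↔ v = w := fun v => ⟨huniq v, fun h => h ▸ hw⟩
    simp [hadj, hu]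
  · have hadj : ∀ v, ¬ M.Adj u v := fun v h => hu h.fst_mem
    simp [hadj, hu]

lemma ncard_verts (hM : M.IsMatching) : M.verts.ncard = 2 * M.edgeSet.ncard := by
  have hdeg (v : V) : M.spanningCoe.degree v = if v ∈ M.verts then 1 else 0 := by
    exact_mod_cast (M.spanningCoe.degree_eq_sum_if_adj (R := ℕ) v).trans (hM.sum_ite_adj v 1)
  rw [← M.edgeSet_spanningCoe, ← coe_edgeFinset, Set.ncard_coe_finset,
    ← sum_degrees_eq_twice_card_edges, Finset.sum_congr rfl fun v _ => hdeg v, Finset.sum_boole,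
    Set.ncard_eq_toFinset_card']
  congr 1; ext; simp

lemma exists_submodule_forall_adj_add_eq_zero (hM : M.IsMatching) :
    ∃ W : Submodule ℂ (EuclideanSpace ℂ V), M.edgeSet.ncard ≤ finrank ℂ W ∧
      ∀ x ∈ W, (∀ v ∉ M.verts, x v = 0) ∧ ∀ u v, M.Adj u v → x u + x v = 0 := by
  let f : ↥M.vertsᶜ ⊕ ↥M.edgeSet → EuclideanSpace ℂ V →ₗ[ℂ] ℂ := Sum.elim
    (fun v => (EuclideanSpace.proj v.1 : StrongDual ℂ _))
    (fun e => (EuclideanSpace.proj e.1.out.1 + EuclideanSpace.proj e.1.out.2 : StrongDual ℂ _))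
  refine ⟨⨅ i, LinearMap.ker (f i), ?_, fun x hx => ⟨fun v hv => ?_, fun u v huv => ?_⟩⟩
  · have hdim := LinearMap.finrank_le_finrank_iInf_ker_add_card f
    simp only [Fintype.card_eq_nat_card, Nat.card_sum, Nat.card_coe_set_eq,
      finrank_euclideanSpace] at hdim
    have := Set.ncard_add_ncard_compl M.verts
    have := hM.ncard_verts
    omega
  · simpa [f] using Submodule.mem_iInf _ |>.mp hx (.inl ⟨v, hv⟩)
  · have hsum := Submodule.mem_iInf _ |>.mp hx (.inr ⟨s(u, v), huv⟩)
    rcases Sym2.out_mk_eq_or_swap u v with ⟨h₁, h₂⟩ | ⟨h₁, h₂⟩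
    · simpa [f, h₁, h₂] using hsum
    · simpa [f, h₁, h₂, add_comm] using hsum

end Subgraph.IsMatching

lemma exists_submodule_forall_adj_of_not_adj_eq (M : G.Subgraph) :
    ∃ W : Submodule ℂ (EuclideanSpace ℂ V),
      Fintype.card V ≤ finrank ℂ W + (G.edgeSet \ M.edgeSet).ncard ∧
      ∀ x ∈ W, ∀ u v, G.Adj u v → ¬ M.Adj u v → x u = x v := by
  let f (e : ↥(G.edgeSet \ M.edgeSet)) : EuclideanSpace ℂ V →ₗ[ℂ] ℂ :=
    (EuclideanSpace.proj e.1.out.1 - EuclideanSpace.proj e.1.out.2 : StrongDual ℂ _)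
  refine ⟨⨅ e, LinearMap.ker (f e), ?_, fun x hx u v huv hM => ?_⟩
  · simpa [Set.ncard_eq_toFinset_card'] using LinearMap.finrank_le_finrank_iInf_ker_add_card f
  · have heq := sub_eq_zero.mp (Submodule.mem_iInf _ |>.mp hx ⟨s(u, v), huv, hM⟩)
    rcases Sym2.out_mk_eq_or_swap u v with ⟨h₁, h₂⟩ | ⟨h₁, h₂⟩
    · simpa [f, h₁, h₂] using heq
    · simpa [f, h₁, h₂] using heq.symm

lemma energy_le_of_isMatching (hM : M.IsMatching) {x : V → ℂ}
    (hx : ∀ u v, G.Adj u v → ¬ M.Adj u v → x u = x v) :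
    G.energy x ≤ 4 * ∑ u, ‖x u‖ ^ 2 := by
  have hterm (u v : V) : (if G.Adj u v then ‖x u - x v‖ ^ 2 else 0) ≤
      (if M.Adj u v then 2 * ‖x u‖ ^ 2 else 0) + (if M.Adj v u then 2 * ‖x v‖ ^ 2 else 0) := by
    by_cases hm : M.Adj u v
    · have := parallelogram_law_with_norm ℂ (x u) (x v)
      simp only [if_pos (M.adj_sub hm), if_pos hm, if_pos hm.symm]
      nlinarith [sq_nonneg ‖x u + x v‖]
    · simp only [if_neg hm, if_neg (fun h : M.Adj v u => hm h.symm)]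
      split_ifs with hG
      · simp [hx u v hG hm]
      · simp
  calc G.energy x
      ≤ ∑ u, ∑ v, ((if M.Adj u v then 2 * ‖x u‖ ^ 2 else 0) +
          (if M.Adj v u then 2 * ‖x v‖ ^ 2 else 0)) :=
        Finset.sum_le_sum fun u _ => Finset.sum_le_sum fun v _ => hterm u v
    _ = 2 * ∑ u, (if u ∈ M.verts then 2 * ‖x u‖ ^ 2 else 0) := by
        simp only [Finset.sum_add_distrib]
        rw [Finset.sum_comm (f := fun u v => if M.Adj v u then _ else _)]
        simp only [hM.sum_ite_adj]
        ring
    _ ≤ 2 * ∑ u, 2 * ‖x u‖ ^ 2 := by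
        gcongr with u
        split_ifs
        exacts [le_rfl, by positivity]
    _ = 4 * ∑ u, ‖x u‖ ^ 2 := by rw [← Finset.mul_sum]; ring

lemma four_mul_le_energy_of_isMatching (hM : M.IsMatching) {x : V → ℂ}
    (hx₀ : ∀ v ∉ M.verts, x v = 0) (hx : ∀ u v, M.Adj u v → x u + x v = 0) :
    4 * ∑ u, ‖x u‖ ^ 2 ≤ G.energy x := by
  have hterm (u v : V) : (if M.Adj u v then 4 * ‖x u‖ ^ 2 else 0) ≤
      (if G.Adj u v then ‖x u - x v‖ ^ 2 else 0) := by
    by_cases hm : M.Adj u v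
    · rw [if_pos hm, if_pos (M.adj_sub hm), eq_neg_of_add_eq_zero_right (hx u v hm),
        sub_neg_eq_add, ← two_mul, norm_mul, Complex.norm_two]
      nlinarith
    · rw [if_neg hm]
      split_ifs <;> positivity
  calc 4 * ∑ u, ‖x u‖ ^ 2 = ∑ u, ∑ v, (if M.Adj u v then 4 * ‖x u‖ ^ 2 else 0) := by
        rw [Finset.mul_sum]
        refine Finset.sum_congr rfl fun u _ => ?_
        rw [hM.sum_ite_adj]
        by_cases hu : u ∈ M.verts
        · rw [if_pos hu]
        · rw [if_neg hu, hx₀ u hu, norm_zero]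
          ring
    _ ≤ G.energy x := Finset.sum_le_sum fun u _ => Finset.sum_le_sum fun v _ => hterm u v

end Matching

section Fin

variable {n : ℕ} (G : SimpleGraph (Fin n))

lemma exists_isMatching_ncard_edgeSet_eq_matchingNumber :
    ∃ M : G.Subgraph, M.IsMatching ∧ M.edgeSet.ncard = matchingNumber G :=
  Nat.sSup_mem (s := {k | ∃ M : G.Subgraph, M.IsMatching ∧ M.edgeSet.ncard = k})
    ⟨0, ⊥, by simp [Subgraph.IsMatching]⟩
    ⟨G.edgeSet.ncard, by rintro _ ⟨M, -, rfl⟩; exact Set.ncard_le_ncard M.edgeSet_subset⟩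

lemma magLap_zero_mulVec_apply (x : Fin n → ℂ) (u : Fin n) :
    (magLap G (fun _ _ => 0) *ᵥ x) u = ∑ v, if G.Adj u v then x u - x v else 0 := by
  have hdeg : ((G.neighborSet u).ncard : ℂ) = ∑ v, if G.Adj u v then 1 else 0 := by
    rw [← G.degree_eq_sum_if_adj, ← card_neighborFinset_eq_degree, ← Set.ncard_coe_finset,
      coe_neighborFinset]
  have hsplit (v : Fin n) : magLap G (fun _ _ => 0) u v * x v =
      (if u = v then ((G.neighborSet u).ncard : ℂ) * x u else 0) +
        (if G.Adj u v then -x v else 0) := by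
    by_cases huv : u = v
    · subst huv; simp [magLap]
    · simp [magLap, huv]
  simp only [mulVec, dotProduct, hsplit]
  rw [Finset.sum_add_distrib, Finset.sum_ite_eq, if_pos (Finset.mem_univ _), hdeg, Finset.sum_mul,
    ← Finset.sum_add_distrib]
  refine Finset.sum_congr rfl fun v _ => ?_
  split_ifs <;> ring

lemma two_mul_re_dotProduct_magLap_zero (x : Fin n → ℂ) :
    2 * (star x ⬝ᵥ (magLap G (fun _ _ => 0) *ᵥ x)).re = G.energy x := by
  have hform : star x ⬝ᵥ (magLap G (fun _ _ => 0) *ᵥ x) =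
      ∑ u, ∑ v, if G.Adj u v then star (x u) * (x u - x v) else 0 := by
    simp only [dotProduct, magLap_zero_mulVec_apply, Finset.mul_sum, Pi.star_apply, mul_ite,
      mul_zero]
  have hswap : star x ⬝ᵥ (magLap G (fun _ _ => 0) *ᵥ x) =
      ∑ u, ∑ v, if G.Adj u v then star (x v) * (x v - x u) else 0 := by
    rw [hform, Finset.sum_comm]
    simp only [G.adj_comm]
  have hsum : 2 * star x ⬝ᵥ (magLap G (fun _ _ => 0) *ᵥ x) =
      ∑ u, ∑ v, if G.Adj u v then ((‖x u - x v‖ ^ 2 : ℝ) : ℂ) else 0 := by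
    rw [two_mul]
    nth_rewrite 1 [hform]
    rw [hswap, ← Finset.sum_add_distrib]
    refine Finset.sum_congr rfl fun u _ => ?_
    rw [← Finset.sum_add_distrib]
    refine Finset.sum_congr rfl fun v _ => ?_
    split_ifs
    · rw [Complex.ofReal_pow, ← Complex.conj_mul', map_sub]
      simp only [RCLike.star_def]; ring
    · simp
  have := congrArg Complex.re hsum
  simpa [energy, Complex.re_sum, apply_ite Complex.re, ← Complex.ofReal_pow] using this

lemma two_mul_re_inner_toEuclideanLin_magLap_zero (x : EuclideanSpace ℂ (Fin n)) :
    2 * re (inner ℂ x (toEuclideanLin (magLap G (fun _ _ => 0)) x)) = G.energy x := by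
  rw [← G.two_mul_re_dotProduct_magLap_zero, EuclideanSpace.inner_eq_star_dotProduct,
    toLpLin_apply, dotProduct_comm]
  rfl

end Fin

end SimpleGraph

/-- For a tree `T` on `n` vertices with matching number `μ(T)`,
`λ_{μ(T)+1}(Δ^T) ≤ 2 ≤ λ_{n-μ(T)+1}(Δ^T)` for the combinatorial Laplacian. -/
theorem tree_matching_eigenvalue_bounds {n : ℕ} (T : SimpleGraph (Fin n)) (hT : T.IsTree) :
    lamb (magLap_isHermitian T (fun _ _ => (0 : ℝ)) (fun _ _ => neg_zero.symm)) (matchingNumber T + 1) ≤ ((2 : ℝ) : EReal) ∧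
    ((2 : ℝ) : EReal) ≤
      lamb (magLap_isHermitian T (fun _ _ => (0 : ℝ)) (fun _ _ => neg_zero.symm)) (n - matchingNumber T + 1) := by
  obtain ⟨M, hM, hμ⟩ := T.exists_isMatching_ncard_edgeSet_eq_matchingNumber
  have hedges : T.edgeSet.ncard + 1 = n := by
    simpa [← Set.ncard_coe_finset, SimpleGraph.coe_edgeFinset] using hT.card_edgeFinset
  have hMT : M.edgeSet.ncard ≤ T.edgeSet.ncard := Set.ncard_le_ncard M.edgeSet_subset
  have hdiff := Set.ncard_sdiff M.edgeSet_subset (t := T.edgeSet)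
  obtain ⟨W₁, hW₁, hW₁x⟩ := T.exists_submodule_forall_adj_of_not_adj_eq M
  obtain ⟨W₂, hW₂, hW₂x⟩ := hM.exists_submodule_forall_adj_add_eq_zero
  rw [Fintype.card_fin] at hW₁
  rw [← hμ]
  constructor
  · refine Matrix.IsHermitian.lamb_le_of_forall_re_inner_le _ (by omega) (W := W₁) (by omega)
      fun x hx => ?_
    have hupper := SimpleGraph.energy_le_of_isMatching hM (hW₁x x hx)
    rw [← T.two_mul_re_inner_toEuclideanLin_magLap_zero, ← EuclideanSpace.norm_sq_eq] at hupper
    linarith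
  · refine Matrix.IsHermitian.le_lamb_of_forall_le_re_inner _ (by omega) (W := W₂) (by omega)
      fun x hx => ?_
    have hlower := SimpleGraph.four_mul_le_energy_of_isMatching hM (hW₂x x hx).1 (hW₂x x hx).2
    rw [← T.two_mul_re_inner_toEuclideanLin_magLap_zero, ← EuclideanSpace.norm_sq_eq] at hlower
    linarith
end

section
/- Let T be a tree on n vertices that has a perfect matching. Then n is even and λ_{n/2+1}(Δ^T) = 2, where Δ^T is the combinatorial Laplacian of T. -/
/-!
View the perfect matching as a spanning `1`-regular subgraph `H` with `m = n / 2` edges, and write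
the Laplacian form as `∑_{uv ∈ E} |x u - x v|²`. On the vectors with `x u = -x v` across every
matching edge (a space of dimension `≥ n - m = m`) the matching edges alone contribute `2‖x‖²`, so
at most `m` eigenvalues are `< 2`. On the vectors constant across the `n - 1 - m` other edges of the
tree (dimension `≥ m + 1`) only the matching edges contribute, at most `2‖x‖²`, so at most `m - 1`
eigenvalues are `> 2`. Hence the `(m + 1)`-st smallest eigenvalue is `2`.
-/

open Finset Matrix
open scoped InnerProductSpace

theorem Module.Basis.finrank_add_card_le {ι K E : Type*} [Fintype ι] [Field K] [AddCommGroup E]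
    [Module K E] (b : Module.Basis ι K E) (S : Finset ι) (W : Submodule K E)
    (hW : ∀ x ∈ W, (∀ i ∉ S, b.repr x i = 0) → x = 0) :
    Module.finrank K W + #S ≤ Fintype.card ι := by
  classical
  let f : W →ₗ[K] (↥(Sᶜ) → K) := LinearMap.pi fun i => (b.coord i).comp W.subtype
  have hf : Function.Injective f := by
    rw [← LinearMap.ker_eq_bot, LinearMap.ker_eq_bot']
    exact fun x hx => Subtype.ext (hW x x.2 fun i hi => congr_fun hx ⟨i, mem_compl.mpr hi⟩)
  have := LinearMap.finrank_le_finrank_of_injective hf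
  rw [Module.finrank_fintype_fun_eq_card, Fintype.card_coe, card_compl] at this
  have := S.card_le_univ
  omega

namespace Matrix.IsHermitian

variable {𝕜 ι : Type*} [RCLike 𝕜] [Fintype ι] [DecidableEq ι] {A : Matrix ι ι 𝕜}
  (hA : A.IsHermitian)

theorem toEuclideanLin_eigenvectorBasis_s3 (i : ι) :
    toEuclideanLin A (hA.eigenvectorBasis i) = (hA.eigenvalues i : 𝕜) • hA.eigenvectorBasis i := by
  ext j
  simpa [RCLike.real_smul_eq_coe_mul] using congr_fun (hA.mulVec_eigenvectorBasis i) j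

theorem eigenvectorBasis_repr_toEuclideanLin (x : EuclideanSpace 𝕜 ι) (i : ι) :
    hA.eigenvectorBasis.repr (toEuclideanLin A x) i =
      hA.eigenvalues i * hA.eigenvectorBasis.repr x i := by
  rw [OrthonormalBasis.repr_apply_apply, OrthonormalBasis.repr_apply_apply,
    ← isSymmetric_toEuclideanLin_iff.mpr hA, toEuclideanLin_eigenvectorBasis_s3, inner_smul_left,
    RCLike.conj_ofReal]

theorem re_inner_toEuclideanLin_sub_mul_norm_sq (x : EuclideanSpace 𝕜 ι) (t : ℝ) :
    RCLike.re ⟪x, toEuclideanLin A x⟫_𝕜 - t * ‖x‖ ^ 2 =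
      ∑ i, (hA.eigenvalues i - t) * ‖hA.eigenvectorBasis.repr x i‖ ^ 2 := by
  rw [← hA.eigenvectorBasis.repr.inner_map_map, ← hA.eigenvectorBasis.repr.norm_map,
    EuclideanSpace.norm_sq_eq, PiLp.inner_apply, map_sum, mul_sum, ← sum_sub_distrib]
  refine sum_congr rfl fun i _ => ?_
  rw [eigenvectorBasis_repr_toEuclideanLin, ← smul_eq_mul, inner_smul_right, RCLike.re_ofReal_mul,
    inner_self_eq_norm_sq]
  ring

theorem exists_eigenvectorBasis_repr_ne_zero {x : EuclideanSpace 𝕜 ι} (hx : x ≠ 0) :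
    ∃ i, hA.eigenvectorBasis.repr x i ≠ 0 := by
  by_contra! h
  exact hx (hA.eigenvectorBasis.repr.map_eq_zero_iff.mp (PiLp.ext h))

theorem re_inner_toEuclideanLin_lt {x : EuclideanSpace 𝕜 ι} (hx0 : x ≠ 0) {t : ℝ}
    (hx : ∀ i, t ≤ hA.eigenvalues i → hA.eigenvectorBasis.repr x i = 0) :
    RCLike.re ⟪x, toEuclideanLin A x⟫_𝕜 < t * ‖x‖ ^ 2 := by
  obtain ⟨j, hj⟩ := hA.exists_eigenvectorBasis_repr_ne_zero hx0
  have hjt : hA.eigenvalues j < t := not_le.mp (mt (hx j) hj)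
  have : ∑ i, (hA.eigenvalues i - t) * ‖hA.eigenvectorBasis.repr x i‖ ^ 2 < ∑ i : ι, 0 := by
    refine sum_lt_sum (fun i _ => ?_) ⟨j, mem_univ j, ?_⟩
    · rcases lt_or_ge (hA.eigenvalues i) t with hi | hi
      · exact mul_nonpos_of_nonpos_of_nonneg (by linarith) (by positivity)
      · simp [hx i hi]
    · exact mul_neg_of_neg_of_pos (by linarith) (by positivity)
  rw [← re_inner_toEuclideanLin_sub_mul_norm_sq, sum_const_zero] at this
  linarith

theorem lt_re_inner_toEuclideanLin {x : EuclideanSpace 𝕜 ι} (hx0 : x ≠ 0) {t : ℝ}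
    (hx : ∀ i, hA.eigenvalues i ≤ t → hA.eigenvectorBasis.repr x i = 0) :
    t * ‖x‖ ^ 2 < RCLike.re ⟪x, toEuclideanLin A x⟫_𝕜 := by
  obtain ⟨j, hj⟩ := hA.exists_eigenvectorBasis_repr_ne_zero hx0
  have hjt : t < hA.eigenvalues j := not_le.mp (mt (hx j) hj)
  have : ∑ i : ι, 0 < ∑ i, (hA.eigenvalues i - t) * ‖hA.eigenvectorBasis.repr x i‖ ^ 2 := by
    refine sum_lt_sum (fun i _ => ?_) ⟨j, mem_univ j, ?_⟩
    · rcases lt_or_ge t (hA.eigenvalues i) with hi | hi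
      · exact mul_nonneg (by linarith) (by positivity)
      · simp [hx i hi]
    · exact mul_pos (by linarith) (by positivity)
  rw [← re_inner_toEuclideanLin_sub_mul_norm_sq, sum_const_zero] at this
  linarith

theorem finrank_add_card_eigenvalues_lt_le (W : Submodule 𝕜 (EuclideanSpace 𝕜 ι)) (t : ℝ)
    (hW : ∀ x ∈ W, t * ‖x‖ ^ 2 ≤ RCLike.re ⟪x, toEuclideanLin A x⟫_𝕜) :
    Module.finrank 𝕜 W + #{i | hA.eigenvalues i < t} ≤ Fintype.card ι := by
  refine hA.eigenvectorBasis.toBasis.finrank_add_card_le _ W fun x hxW hx => ?_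
  simp only [OrthonormalBasis.coe_toBasis_repr_apply, mem_filter_univ, not_lt] at hx
  by_contra hx0
  exact (hW x hxW).not_gt (hA.re_inner_toEuclideanLin_lt hx0 hx)

theorem finrank_add_card_lt_eigenvalues_le (W : Submodule 𝕜 (EuclideanSpace 𝕜 ι)) (t : ℝ)
    (hW : ∀ x ∈ W, RCLike.re ⟪x, toEuclideanLin A x⟫_𝕜 ≤ t * ‖x‖ ^ 2) :
    Module.finrank 𝕜 W + #{i | t < hA.eigenvalues i} ≤ Fintype.card ι := by
  refine hA.eigenvectorBasis.toBasis.finrank_add_card_le _ W fun x hxW hx => ?_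
  simp only [OrthonormalBasis.coe_toBasis_repr_apply, mem_filter_univ, not_lt] at hx
  by_contra hx0
  exact (hW x hxW).not_gt (hA.lt_re_inner_toEuclideanLin hx0 hx)

end Matrix.IsHermitian

theorem Monotone.eq_of_card_lt_le_of_card_gt_lt {n : ℕ} {α : Type*} [LinearOrder α]
    {g : Fin n → α} (hg : Monotone g) {t : α} (k : Fin n) (hlt : #{i | g i < t} ≤ k)
    (hgt : #{i | t < g i} < n - k) : g k = t := by
  refine le_antisymm (not_lt.mp fun hk => ?_) (not_lt.mp fun hk => ?_)
  · have := card_le_card (s := Ici k) fun i hi =>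
      (mem_filter_univ _).mpr (hk.trans_le (hg (mem_Ici.mp hi)))
    rw [Fin.card_Ici] at this
    omega
  · have := card_le_card (s := Iic k) fun i hi =>
      (mem_filter_univ _).mpr ((hg (mem_Iic.mp hi)).trans_lt hk)
    rw [Fin.card_Iic] at this
    omega

theorem lamb_succ_eq_of_card_eigenvalues {n : ℕ} {A : Matrix (Fin n) (Fin n) ℂ} (hA : A.IsHermitian)
    {k : ℕ} (hk : k < n) {t : ℝ} (hlt : #{i | hA.eigenvalues i < t} ≤ k)
    (hgt : #{i | t < hA.eigenvalues i} < n - k) : lamb hA (k + 1) = t := by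
  let σ := Tuple.sort hA.eigenvalues
  have hσ (p : ℝ → Prop) [DecidablePred p] :
      #{i | p (hA.eigenvalues (σ i))} = #{i | p (hA.eigenvalues i)} :=
    card_equiv σ (by simp)
  have := (Tuple.monotone_sort hA.eigenvalues).eq_of_card_lt_le_of_card_gt_lt ⟨k, hk⟩
    ((hσ (· < t)).trans_le hlt) ((hσ (t < ·)).trans_lt hgt)
  rw [lamb, dif_pos ⟨by omega, by omega⟩]
  simpa using this

namespace SimpleGraph

variable {V 𝕜 : Type*} [RCLike 𝕜]

section Incidence

variable (K : SimpleGraph V)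

/-- Each edge gets an arbitrary orientation `e.out`; for `ε = 1` this is the oriented incidence map
(its kernel: vectors constant across edges), for `ε = -1` the unoriented one. -/
noncomputable def incidenceMap (ε : 𝕜) : EuclideanSpace 𝕜 V →ₗ[𝕜] K.edgeSet → 𝕜 where
  toFun x e := x e.1.out.1 - ε * x e.1.out.2
  map_add' x y := by ext; simp only [PiLp.add_apply, Pi.add_apply]; ring
  map_smul' c x := by
    ext; simp only [PiLp.smul_apply, smul_eq_mul, RingHom.id_apply, Pi.smul_apply]; ring

variable {K}

theorem eq_mul_of_mem_ker_incidenceMap {ε : 𝕜} (hε : ε * ε = 1) {x : EuclideanSpace 𝕜 V}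
    (hx : x ∈ LinearMap.ker (K.incidenceMap ε)) {i j : V} (hij : K.Adj i j) : x i = ε * x j := by
  let e : K.edgeSet := ⟨s(i, j), hij⟩
  have he : x e.1.out.1 = ε * x e.1.out.2 := sub_eq_zero.mp (congr_fun hx e)
  have hout : s(e.1.out.1, e.1.out.2) = s(i, j) := e.1.out_eq
  rcases Sym2.eq_iff.mp hout with ⟨h₁, h₂⟩ | ⟨h₁, h₂⟩
  · rwa [h₁, h₂] at he
  · rw [h₁, h₂] at he
    rw [he, ← mul_assoc, hε, one_mul]

theorem card_le_finrank_ker_incidenceMap_add [Fintype V] [Fintype K.edgeSet] (ε : 𝕜) :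
    Fintype.card V ≤ Module.finrank 𝕜 (LinearMap.ker (K.incidenceMap ε)) + #K.edgeFinset := by
  have := LinearMap.finrank_range_add_finrank_ker (K.incidenceMap ε)
  have := Submodule.finrank_le (LinearMap.range (K.incidenceMap ε))
  rw [finrank_euclideanSpace] at *
  rw [Module.finrank_fintype_fun_eq_card, ← edgeFinset_card] at this
  omega

end Incidence

section Energy

variable [Fintype V] (G : SimpleGraph V) [DecidableRel G.Adj]

noncomputable def dirichletEnergy (x : EuclideanSpace 𝕜 V) : ℝ :=
  (∑ i, ∑ j, if G.Adj i j then ‖x i - x j‖ ^ 2 else 0) / 2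

theorem re_inner_toEuclideanLin_lapMatrix [DecidableEq V] (x : EuclideanSpace 𝕜 V) :
    RCLike.re ⟪x, toEuclideanLin (G.lapMatrix 𝕜) x⟫_𝕜 = G.dirichletEnergy x := by
  let a : V → V → ℝ := fun i j => if G.Adj i j then RCLike.re ⟪x i, x i - x j⟫_𝕜 else 0
  have hform : RCLike.re ⟪x, toEuclideanLin (G.lapMatrix 𝕜) x⟫_𝕜 = ∑ i, ∑ j, a i j := by
    simp only [PiLp.inner_apply, toLpLin_apply, lapMatrix_mulVec_apply, map_sum]
    refine sum_congr rfl fun i _ => ?_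
    rw [G.degree_eq_sum_if_adj (R := 𝕜), sum_mul, neighborFinset_eq_filter, sum_filter,
      ← sum_sub_distrib, inner_sum, map_sum]
    refine sum_congr rfl fun j _ => ?_
    split_ifs <;> simp [a, *]
  have hpair (i j : V) : a i j + a j i = if G.Adj i j then ‖x i - x j‖ ^ 2 else 0 := by
    simp only [a, G.adj_comm j i]
    split_ifs
    · rw [← map_add, ← neg_sub (x i) (x j), inner_neg_right, ← sub_eq_add_neg, ← inner_sub_left,
        inner_self_eq_norm_sq]
    · simp
  rw [dirichletEnergy, hform, eq_div_iff two_ne_zero]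
  simp only [← hpair, sum_add_distrib]
  rw [sum_comm (f := fun i j => a j i)]
  ring

variable {G} {H : SimpleGraph V} [DecidableRel H.Adj]

theorem dirichletEnergy_mono (hHG : H ≤ G) (x : EuclideanSpace 𝕜 V) :
    H.dirichletEnergy x ≤ G.dirichletEnergy x := by
  unfold dirichletEnergy
  gcongr with i _ j _
  split_ifs with hH hG hG
  · exact le_rfl
  · exact absurd (hHG hH) hG
  · positivity
  · exact le_rfl

theorem dirichletEnergy_eq_of_forall_sdiff_adj (hHG : H ≤ G) {x : EuclideanSpace 𝕜 V}
    (hx : ∀ ⦃i j⦄, (G \ H).Adj i j → x i = x j) : G.dirichletEnergy x = H.dirichletEnergy x := by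
  unfold dirichletEnergy
  congr 1
  refine sum_congr rfl fun i _ => sum_congr rfl fun j _ => ?_
  by_cases hH : H.Adj i j
  · simp [hH, hHG hH]
  · by_cases hG : G.Adj i j
    · simp [hH, hG, hx (show (G \ H).Adj i j from ⟨hG, hH⟩)]
    · simp [hH, hG]

theorem IsRegularOfDegree.sum_sum_ite_adj {d : ℕ} (hH : H.IsRegularOfDegree d) (f : V → ℝ) :
    ∑ i, ∑ j, (if H.Adj i j then f i else 0) = d * ∑ i, f i := by
  rw [mul_sum]
  refine sum_congr rfl fun i _ => ?_
  rw [← sum_filter, sum_const, ← neighborFinset_eq_filter, card_neighborFinset_eq_degree,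
    hH.degree_eq, nsmul_eq_mul]

theorem IsRegularOfDegree.dirichletEnergy_le {d : ℕ} (hH : H.IsRegularOfDegree d)
    (x : EuclideanSpace 𝕜 V) : H.dirichletEnergy x ≤ 2 * d * ‖x‖ ^ 2 := by
  have hswap : ∑ i, ∑ j, (if H.Adj i j then ‖x j‖ ^ 2 else 0) = d * ‖x‖ ^ 2 := by
    rw [sum_comm, EuclideanSpace.norm_sq_eq, ← hH.sum_sum_ite_adj]
    simp only [H.adj_comm]
  have hle (i j : V) : (if H.Adj i j then ‖x i - x j‖ ^ 2 else 0) ≤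
      (if H.Adj i j then 2 * ‖x i‖ ^ 2 else 0) + (if H.Adj i j then 2 * ‖x j‖ ^ 2 else 0) := by
    split_ifs
    · nlinarith [mul_self_le_mul_self (norm_nonneg _) (norm_sub_le (x i) (x j)),
        sq_nonneg (‖x i‖ - ‖x j‖)]
    · simp
  unfold dirichletEnergy
  rw [div_le_iff₀ two_pos]
  calc ∑ i, ∑ j, (if H.Adj i j then ‖x i - x j‖ ^ 2 else 0)
      ≤ ∑ i, ∑ j, ((if H.Adj i j then 2 * ‖x i‖ ^ 2 else 0) +
          (if H.Adj i j then 2 * ‖x j‖ ^ 2 else 0)) := by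
        gcongr with i _ j _; exact hle i j
    _ = 2 * d * ‖x‖ ^ 2 * 2 := by
        simp only [sum_add_distrib, ← mul_ite_zero, ← mul_sum, hswap, hH.sum_sum_ite_adj,
          EuclideanSpace.norm_sq_eq]
        ring

theorem IsRegularOfDegree.dirichletEnergy_eq_of_forall_adj {d : ℕ} (hH : H.IsRegularOfDegree d)
    {x : EuclideanSpace 𝕜 V} (hx : ∀ ⦃i j⦄, H.Adj i j → x i = -x j) :
    H.dirichletEnergy x = 2 * d * ‖x‖ ^ 2 := by
  have hterm (i j : V) : (if H.Adj i j then ‖x i - x j‖ ^ 2 else 0) =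
      if H.Adj i j then 4 * ‖x i‖ ^ 2 else 0 := by
    split_ifs with h
    · rw [hx h.symm, sub_neg_eq_add, ← two_smul 𝕜, norm_smul, RCLike.norm_two]
      ring
    · rfl
  unfold dirichletEnergy
  simp only [hterm, ← mul_ite_zero, ← mul_sum, hH.sum_sum_ite_adj, EuclideanSpace.norm_sq_eq]
  ring

theorem IsRegularOfDegree.mul_norm_sq_le_re_inner_lapMatrix [DecidableEq V] {d : ℕ}
    (hH : H.IsRegularOfDegree d) (hHG : H ≤ G) {x : EuclideanSpace 𝕜 V}
    (hx : x ∈ LinearMap.ker (H.incidenceMap (-1 : 𝕜))) :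
    2 * d * ‖x‖ ^ 2 ≤ RCLike.re ⟪x, toEuclideanLin (G.lapMatrix 𝕜) x⟫_𝕜 := by
  have hanti : ∀ ⦃i j⦄, H.Adj i j → x i = -x j := fun i j hij => by
    simpa using eq_mul_of_mem_ker_incidenceMap (by norm_num) hx hij
  rw [re_inner_toEuclideanLin_lapMatrix, ← hH.dirichletEnergy_eq_of_forall_adj hanti]
  exact dirichletEnergy_mono hHG x

theorem IsRegularOfDegree.re_inner_lapMatrix_le [DecidableEq V] {d : ℕ}
    (hH : H.IsRegularOfDegree d) (hHG : H ≤ G) {x : EuclideanSpace 𝕜 V}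
    (hx : x ∈ LinearMap.ker ((G \ H).incidenceMap (1 : 𝕜))) :
    RCLike.re ⟪x, toEuclideanLin (G.lapMatrix 𝕜) x⟫_𝕜 ≤ 2 * d * ‖x‖ ^ 2 := by
  have hconst : ∀ ⦃i j⦄, (G \ H).Adj i j → x i = x j := fun i j hij => by
    simpa using eq_mul_of_mem_ker_incidenceMap (one_mul 1) hx hij
  rw [re_inner_toEuclideanLin_lapMatrix, dirichletEnergy_eq_of_forall_sdiff_adj hHG hconst]
  exact hH.dirichletEnergy_le x

end Energy

end SimpleGraph

theorem magLap_zero {n : ℕ} (G : SimpleGraph (Fin n)) [DecidableRel G.Adj] :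
    magLap G (fun _ _ => 0) = G.lapMatrix ℂ := by
  ext u v
  rw [magLap, of_apply, SimpleGraph.lapMatrix, Matrix.sub_apply, SimpleGraph.degMatrix,
    SimpleGraph.adjMatrix_apply]
  by_cases huv : u = v
  · subst huv
    simp [← G.card_neighborSet_eq_degree, Set.ncard_eq_toFinset_card']
  · by_cases hadj : G.Adj u v <;> simp [huv, hadj]

/-- A tree on `n` vertices with a perfect matching has `n` even and
`λ_{n/2+1}(Δ^T) = 2` for the combinatorial Laplacian. -/
theorem matchable_tree_eigenvalue {n : ℕ} (T : SimpleGraph (Fin n)) (hT : T.IsTree)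
    (hM : ∃ M : T.Subgraph, M.IsPerfectMatching) :
    Even n ∧
      lamb (magLap_isHermitian T (fun _ _ => (0 : ℝ)) (fun _ _ => neg_zero.symm)) (n / 2 + 1) = ((2 : ℝ) : EReal) := by
  classical
  obtain ⟨M, hM⟩ := hM
  set H := M.spanningCoe
  have hH : H.IsRegularOfDegree 1 := fun v =>
    H.degree_eq_one_iff_existsUnique_adj.mpr (SimpleGraph.Subgraph.isPerfectMatching_iff.mp hM v)
  have hHT : H ≤ T := M.spanningCoe_le
  have hn : n = 2 * #H.edgeFinset := by
    simpa [hH.degree_eq] using H.sum_degrees_eq_twice_card_edges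
  have hTE : #T.edgeFinset + 1 = n := by simpa using hT.card_edgeFinset
  have hRE : #(T \ H).edgeFinset = #T.edgeFinset - #H.edgeFinset := by
    rw [SimpleGraph.edgeFinset_sdiff, card_sdiff_of_subset (SimpleGraph.edgeFinset_mono hHT)]
  set hL := magLap_isHermitian T (fun _ _ => (0 : ℝ)) (fun _ _ => neg_zero.symm)
  have hlt := hL.finrank_add_card_eigenvalues_lt_le _ 2 fun x hx => by
    simpa [magLap_zero] using hH.mul_norm_sq_le_re_inner_lapMatrix hHT hx
  have hgt := hL.finrank_add_card_lt_eigenvalues_le _ 2 fun x hx => by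
    simpa [magLap_zero] using hH.re_inner_lapMatrix_le hHT hx
  have hdim₁ := H.card_le_finrank_ker_incidenceMap_add (-1 : ℂ)
  have hdim₂ := (T \ H).card_le_finrank_ker_incidenceMap_add (1 : ℂ)
  rw [Fintype.card_fin] at *
  refine ⟨⟨#H.edgeFinset, by omega⟩, ?_⟩
  rw [show n / 2 = #H.edgeFinset by omega]
  exact lamb_succ_eq_of_card_eigenvalues hL (by omega) (by omega) (by omega)
end

section
/- Let T be a tree on n vertices that has a perfect matching. Then n is even and λ_{n/2}(Δ^T) < 2 < λ_{n/2+2}(Δ^T), where Δ^T is the combinatorial Laplacian of T. -/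
/-!
Let `M` be the perfect matching and `R` the set of the remaining edges of `T`. Summing over
ordered adjacent pairs,
`2 ⟪x, Δx⟫ - 4 ‖x‖² = ∑_{ab ∈ R} |x a - x b|² - ∑_{ab ∈ M} |x a + x b|²`.
Hence the Rayleigh quotient is `≤ 2` on the vectors that are constant along every edge of `R`,
and `≥ 2` on those that are antisymmetric along every edge of `M`; in both cases equality puts
`x` in both subspaces, whose intersection is at most a line since `T` is connected. A tree has
`n - 1` edges and `M` has `n / 2` of them, so the two subspaces have dimensions at least
`n / 2 + 1` and `n / 2`, and the min-max principle gives `n / 2` eigenvalues below `2` and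
`n / 2 - 1` above `2`.
-/

open Finset Matrix

theorem Submodule.finrank_le_finrank_add_finrank_of_ker_le {K E F : Type*} [DivisionRing K]
    [AddCommGroup E] [Module K E] [FiniteDimensional K E] [AddCommGroup F] [Module K F]
    [FiniteDimensional K F] (f : E →ₗ[K] F) (S Z : Submodule K E)
    (hker : ∀ x ∈ S, f x = 0 → x ∈ Z) :
    Module.finrank K S ≤ Module.finrank K F + Module.finrank K Z := by
  have hrank := LinearMap.finrank_range_add_finrank_ker (f.domRestrict S)
  have hrange := Submodule.finrank_le (LinearMap.range (f.domRestrict S))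
  have hkerZ : (LinearMap.ker (f.domRestrict S)).map S.subtype ≤ Z := by
    rintro _ ⟨x, hx, rfl⟩
    exact hker x x.2 hx
  have := Submodule.finrank_mono hkerZ
  rw [Submodule.finrank_map_subtype_eq] at this
  omega

namespace Matrix.IsHermitian

variable {𝕜 ι : Type*} [RCLike 𝕜] [Fintype ι] [DecidableEq ι] {A : Matrix ι ι 𝕜}

theorem re_dotProduct_mulVec_sub_eq_sum (hA : A.IsHermitian) (r : ℝ) (x : ι → 𝕜) :
    RCLike.re (star x ⬝ᵥ A *ᵥ x) - r * RCLike.re (star x ⬝ᵥ x) =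
      ∑ i, (hA.eigenvalues i - r) * ‖(star (hA.eigenvectorUnitary : Matrix ι ι 𝕜) *ᵥ x) i‖ ^ 2 := by
  set U : Matrix ι ι 𝕜 := ↑hA.eigenvectorUnitary with hU
  set y := star U *ᵥ x
  have hquad : star x ⬝ᵥ A *ᵥ x = star y ⬝ᵥ diagonal (RCLike.ofReal ∘ hA.eigenvalues) *ᵥ y := by
    conv_lhs => rw [hA.spectral_theorem]
    simp only [Unitary.conjStarAlgAut_apply, ← mulVec_mulVec, dotProduct_mulVec, y, star_mulVec,
      ← star_eq_conjTranspose, star_star, hU]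
  have hnorm : star x ⬝ᵥ x = star y ⬝ᵥ y := by
    simp only [y, star_mulVec, dotProduct_mulVec, vecMul_vecMul, ← star_eq_conjTranspose,
      star_star, hU]
    rw [Unitary.mul_star_self_of_mem hA.eigenvectorUnitary.2, vecMul_one]
  rw [hquad, hnorm]
  simp only [dotProduct, mulVec_diagonal, Pi.star_apply, Function.comp_apply, map_sum, mul_sum,
    ← sum_sub_distrib]
  refine sum_congr rfl fun i _ => ?_
  rw [RCLike.star_def, ← mul_assoc, mul_comm _ (y i), ← mul_assoc, RCLike.mul_conj,
    RCLike.conj_mul]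
  simp only [← RCLike.ofReal_pow, ← RCLike.ofReal_mul, RCLike.ofReal_re]
  ring

theorem finrank_le_card_eigenvalues_lt_add (hA : A.IsHermitian) (r : ℝ)
    (S Z : Submodule 𝕜 (ι → 𝕜))
    (hS : ∀ x ∈ S, RCLike.re (star x ⬝ᵥ A *ᵥ x) ≤ r * RCLike.re (star x ⬝ᵥ x))
    (hZ : ∀ x ∈ S, RCLike.re (star x ⬝ᵥ A *ᵥ x) = r * RCLike.re (star x ⬝ᵥ x) → x ∈ Z) :
    Module.finrank 𝕜 S ≤ #{i | hA.eigenvalues i < r} + Module.finrank 𝕜 Z := by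
  set U : Matrix ι ι 𝕜 := ↑hA.eigenvectorUnitary
  let f := (LinearMap.funLeft 𝕜 𝕜 (Subtype.val : {i // hA.eigenvalues i < r} → ι)).comp
    (star U).mulVecLin
  have := Submodule.finrank_le_finrank_add_finrank_of_ker_le f S Z fun x hx hfx => by
    refine hZ x hx (le_antisymm (hS x hx) (sub_nonneg.mp ?_))
    rw [hA.re_dotProduct_mulVec_sub_eq_sum]
    refine sum_nonneg fun i _ => ?_
    by_cases hi : hA.eigenvalues i < r
    · have : (star U *ᵥ x) i = 0 := congrFun hfx ⟨i, hi⟩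
      simp [U, this]
    · exact mul_nonneg (sub_nonneg.mpr (not_lt.mp hi)) (sq_nonneg _)
  rwa [Module.finrank_fintype_fun_eq_card, Fintype.card_subtype] at this

theorem finrank_le_card_lt_eigenvalues_add (hA : A.IsHermitian) (r : ℝ)
    (S Z : Submodule 𝕜 (ι → 𝕜))
    (hS : ∀ x ∈ S, r * RCLike.re (star x ⬝ᵥ x) ≤ RCLike.re (star x ⬝ᵥ A *ᵥ x))
    (hZ : ∀ x ∈ S, RCLike.re (star x ⬝ᵥ A *ᵥ x) = r * RCLike.re (star x ⬝ᵥ x) → x ∈ Z) :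
    Module.finrank 𝕜 S ≤ #{i | r < hA.eigenvalues i} + Module.finrank 𝕜 Z := by
  set U : Matrix ι ι 𝕜 := ↑hA.eigenvectorUnitary
  let f := (LinearMap.funLeft 𝕜 𝕜 (Subtype.val : {i // r < hA.eigenvalues i} → ι)).comp
    (star U).mulVecLin
  have := Submodule.finrank_le_finrank_add_finrank_of_ker_le f S Z fun x hx hfx => by
    refine hZ x hx (le_antisymm (sub_nonpos.mp ?_) (hS x hx))
    rw [hA.re_dotProduct_mulVec_sub_eq_sum]
    refine sum_nonpos fun i _ => ?_
    by_cases hi : r < hA.eigenvalues i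
    · have : (star U *ᵥ x) i = 0 := congrFun hfx ⟨i, hi⟩
      simp [U, this]
    · exact mul_nonpos_of_nonpos_of_nonneg (sub_nonpos.mpr (not_lt.mp hi)) (sq_nonneg _)
  rwa [Module.finrank_fintype_fun_eq_card, Fintype.card_subtype] at this

end Matrix.IsHermitian

namespace Tuple

variable {α : Type*} [LinearOrder α] {N : ℕ} (f : Fin N → α) (c : α)

theorem card_filter_comp_sort (p : α → Prop) [DecidablePred p] :
    #{j | p ((f ∘ sort f) j)} = #{i | p (f i)} := by
  simp only [← Fintype.card_subtype]
  exact Fintype.card_congr ((sort f).subtypeEquiv fun _ => Iff.rfl)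

theorem comp_sort_lt_of_le_card {k : Fin N} (hk : k.val + 1 ≤ #{i | f i < c}) :
    (f ∘ sort f) k < c := by
  by_contra! hck
  have hsub : ({j | (f ∘ sort f) j < c} : Finset (Fin N)) ⊆ Iio k := fun j hj => by
    simp only [mem_filter, mem_univ, true_and] at hj
    exact mem_Iio.mpr (lt_of_not_ge fun hkj => (hck.trans (monotone_sort f hkj)).not_gt hj)
  have := card_le_card hsub
  rw [card_filter_comp_sort f (· < c), Fin.card_Iio] at this
  omega

theorem lt_comp_sort_of_le_card {k : Fin N} (hk : N ≤ k.val + #{i | c < f i}) :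
    c < (f ∘ sort f) k := by
  by_contra! hck
  have hsub : ({j | c < (f ∘ sort f) j} : Finset (Fin N)) ⊆ Ioi k := fun j hj => by
    simp only [mem_filter, mem_univ, true_and] at hj
    exact mem_Ioi.mpr (lt_of_not_ge fun hjk => ((monotone_sort f hjk).trans hck).not_gt hj)
  have := card_le_card hsub
  rw [card_filter_comp_sort f (c < ·), Fin.card_Ioi] at this
  omega

end Tuple

section lamb

variable {n : ℕ} {A : Matrix (Fin n) (Fin n) ℂ} (hA : A.IsHermitian) {k : ℕ} {c : ℝ}

theorem lamb_lt_of_le_card (hk : k ≤ #{i | hA.eigenvalues i < c}) : lamb hA k < c := by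
  have hn : #{i | hA.eigenvalues i < c} ≤ n := (card_filter_le _ _).trans (card_fin n).le
  unfold lamb
  split_ifs with h h0
  · exact EReal.coe_lt_coe_iff.mpr (Tuple.comp_sort_lt_of_le_card _ _ (by simp only; omega))
  · exact EReal.bot_lt_coe c
  · omega

theorem lt_lamb_of_le_card (hk : n + 1 ≤ k + #{i | c < hA.eigenvalues i}) : c < lamb hA k := by
  have hn : #{i | c < hA.eigenvalues i} ≤ n := (card_filter_le _ _).trans (card_fin n).le
  unfold lamb
  split_ifs with h h0
  · exact EReal.coe_lt_coe_iff.mpr (Tuple.lt_comp_sort_of_le_card _ _ (by simp only; omega))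
  · omega
  · exact EReal.coe_lt_top c

end lamb

namespace SimpleGraph

section edgeConstraint

variable {V K : Type*} [Field K] (G : SimpleGraph V)

def edgeConstraint (c : K) : Submodule K (V → K) where
  carrier := {x | ∀ a b, G.Adj a b → x a = c * x b}
  add_mem' hx hy a b hab := by simp only [Pi.add_apply, hx a b hab, hy a b hab]; ring
  zero_mem' _ _ _ := by simp
  smul_mem' d x hx a b hab := by simp only [Pi.smul_apply, smul_eq_mul, hx a b hab]; ring

@[simp]
theorem mem_edgeConstraint {c : K} {x : V → K} :
    x ∈ G.edgeConstraint c ↔ ∀ a b, G.Adj a b → x a = c * x b := Iff.rfl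

/-- Since `c * c = 1`, the constraint along an edge does not depend on its orientation, so one
equation per edge suffices. -/
theorem card_sub_card_edgeFinset_le_finrank_edgeConstraint [Fintype V] [Fintype G.edgeSet]
    {c : K} (hc : c * c = 1) :
    Fintype.card V - #G.edgeFinset ≤ Module.finrank K (G.edgeConstraint c) := by
  let f : (V → K) →ₗ[K] (G.edgeSet → K) := LinearMap.pi fun e =>
    LinearMap.proj (e : Sym2 V).out.1 - c • LinearMap.proj (e : Sym2 V).out.2
  have := Submodule.finrank_le_finrank_add_finrank_of_ker_le f ⊤ (G.edgeConstraint c)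
    fun x _ hfx a b hab => by
      have hout : s((s(a, b) : Sym2 V).out.1, (s(a, b) : Sym2 V).out.2) = s(a, b) :=
        Quot.out_eq _
      have hx := congrFun hfx ⟨s(a, b), hab⟩
      simp only [f, LinearMap.pi_apply, LinearMap.sub_apply, LinearMap.smul_apply,
        LinearMap.proj_apply, smul_eq_mul, Pi.zero_apply, sub_eq_zero] at hx
      rcases Sym2.eq_iff.mp hout with ⟨h1, h2⟩ | ⟨h1, h2⟩
      · rwa [h1, h2] at hx
      · rw [h1, h2] at hx
        rw [hx, ← mul_assoc, hc, one_mul]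
  rw [finrank_top, Module.finrank_fintype_fun_eq_card, Module.finrank_fintype_fun_eq_card,
    card_edgeSet] at this
  omega

theorem Connected.finrank_edgeConstraint_sdiff_inf_le_one {G H : SimpleGraph V}
    (hG : G.Connected) (c d : K) :
    Module.finrank K ↥((G \ H).edgeConstraint c ⊓ H.edgeConstraint d) ≤ 1 := by
  obtain ⟨v₀⟩ := hG.nonempty
  have hzero : ∀ x ∈ (G \ H).edgeConstraint c ⊓ H.edgeConstraint d, x v₀ = 0 → x = 0 :=
    fun x ⟨hGH, hH⟩ hx₀ => funext fun w => by
      obtain ⟨p⟩ := hG.preconnected v₀ w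
      induction p with
      | nil => exact hx₀
      | @cons a b _ hab _ ih =>
        refine ih ?_
        by_cases hHab : H.Adj a b
        · rw [hH b a hHab.symm, hx₀, mul_zero]
        · rw [hGH b a ⟨hab.symm, fun h => hHab h.symm⟩, hx₀, mul_zero]
  have hinj : Function.Injective ((LinearMap.proj v₀ : (V → K) →ₗ[K] K).comp
      ((G \ H).edgeConstraint c ⊓ H.edgeConstraint d).subtype) := by
    rw [← LinearMap.ker_eq_bot, Submodule.eq_bot_iff]
    exact fun x hx => Subtype.ext (hzero x x.2 hx)
  simpa using LinearMap.finrank_le_finrank_of_injective hinj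

end edgeConstraint

section edgeEnergy

variable {V : Type*} [Fintype V] (G : SimpleGraph V) [DecidableRel G.Adj]

noncomputable def edgeEnergy (c : ℂ) (x : V → ℂ) : ℝ :=
  ∑ a, ∑ b, if G.Adj a b then Complex.normSq (x a - c * x b) else 0

variable {G}

theorem edgeEnergy_nonneg (c : ℂ) (x : V → ℂ) : 0 ≤ G.edgeEnergy c x :=
  sum_nonneg fun a _ => sum_nonneg fun b _ => by split_ifs <;> simp [Complex.normSq_nonneg]

theorem edgeEnergy_eq_zero_iff {c : ℂ} {x : V → ℂ} :
    G.edgeEnergy c x = 0 ↔ x ∈ G.edgeConstraint c := by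
  have hterm : ∀ a b, 0 ≤ if G.Adj a b then Complex.normSq (x a - c * x b) else 0 :=
    fun a b => by split_ifs <;> simp [Complex.normSq_nonneg]
  simp only [edgeEnergy, sum_eq_zero_iff_of_nonneg fun a _ => sum_nonneg fun b _ => hterm a b,
    sum_eq_zero_iff_of_nonneg fun b _ => hterm _ b, mem_univ, true_implies, mem_edgeConstraint]
  refine forall_congr' fun a => forall_congr' fun b => ?_
  split_ifs with hab <;> simp [hab, sub_eq_zero]

theorem edgeEnergy_eq_add_sdiff {H : SimpleGraph V} [DecidableRel H.Adj] (hHG : H ≤ G) (c : ℂ)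
    (x : V → ℂ) : G.edgeEnergy c x = H.edgeEnergy c x + (G \ H).edgeEnergy c x := by
  simp only [edgeEnergy, ← sum_add_distrib]
  refine sum_congr rfl fun a _ => sum_congr rfl fun b _ => ?_
  by_cases hH : H.Adj a b
  · simp [hH, hHG hH]
  · simp [hH]

theorem edgeEnergy_one_add_edgeEnergy_neg_one (x : V → ℂ) :
    G.edgeEnergy 1 x + G.edgeEnergy (-1) x = 4 * ∑ a, G.degree a * Complex.normSq (x a) := by
  have hpar : ∀ a b, Complex.normSq (x a - 1 * x b) + Complex.normSq (x a - -1 * x b)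
      = 2 * Complex.normSq (x a) + 2 * Complex.normSq (x b) := fun a b => by
    simp only [one_mul, neg_one_mul, sub_neg_eq_add, Complex.normSq_sub, Complex.normSq_add]
    ring
  have hsymm : (∑ a, ∑ b, if G.Adj a b then Complex.normSq (x b) else 0)
      = ∑ a, ∑ b, if G.Adj a b then Complex.normSq (x a) else 0 := by
    rw [sum_comm]
    simp only [G.adj_comm]
  calc G.edgeEnergy 1 x + G.edgeEnergy (-1) x
      = ∑ a, ∑ b, ((if G.Adj a b then 2 * Complex.normSq (x a) else 0) +
          if G.Adj a b then 2 * Complex.normSq (x b) else 0) := by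
        simp only [edgeEnergy, ← sum_add_distrib]
        refine sum_congr rfl fun a _ => sum_congr rfl fun b _ => ?_
        split_ifs <;> simp only [hpar, add_zero]
    _ = 4 * ∑ a, ∑ b, if G.Adj a b then Complex.normSq (x a) else 0 := by
        simp only [sum_add_distrib, ← mul_ite_zero, ← mul_sum, hsymm]
        ring
    _ = 4 * ∑ a, G.degree a * Complex.normSq (x a) := by
        simp only [G.degree_eq_sum_if_adj (R := ℝ), sum_mul, ite_mul, one_mul, zero_mul]

theorem two_mul_re_dotProduct_lapMatrix_mulVec [DecidableEq V] (x : V → ℂ) :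
    2 * (star x ⬝ᵥ G.lapMatrix ℂ *ᵥ x).re = G.edgeEnergy 1 x := by
  have hform : star x ⬝ᵥ G.lapMatrix ℂ *ᵥ x
      = ∑ a, ∑ b, if G.Adj a b then star (x a) * (x a - x b) else 0 := by
    simp only [dotProduct, lapMatrix_mulVec_apply, G.degree_eq_sum_if_adj (R := ℂ),
      neighborFinset_eq_filter, sum_filter, Pi.star_apply]
    refine sum_congr rfl fun a _ => ?_
    rw [sum_mul, ← sum_sub_distrib, mul_sum]
    refine sum_congr rfl fun b _ => ?_
    split_ifs <;> ring
  have hpair : ∀ a b : V, (star (x a) * (x a - x b)).re + (star (x b) * (x b - x a)).re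
      = Complex.normSq (x a - 1 * x b) := fun a b => by
    simp only [Complex.star_def, Complex.mul_re, Complex.conj_re, Complex.conj_im, Complex.sub_re,
      Complex.sub_im, one_mul, Complex.normSq_apply]
    ring
  have hswap : (∑ a, ∑ b, if G.Adj a b then (star (x b) * (x b - x a)).re else 0)
      = ∑ a, ∑ b, if G.Adj a b then (star (x a) * (x a - x b)).re else 0 := by
    rw [sum_comm]
    simp only [G.adj_comm]
  have hre : (star x ⬝ᵥ G.lapMatrix ℂ *ᵥ x).re
      = ∑ a, ∑ b, if G.Adj a b then (star (x a) * (x a - x b)).re else 0 := by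
    simp only [hform, Complex.re_sum, apply_ite Complex.re, Complex.zero_re]
  rw [two_mul, hre]
  nth_rw 2 [← hswap]
  simp only [← sum_add_distrib, edgeEnergy]
  refine sum_congr rfl fun a _ => sum_congr rfl fun b _ => ?_
  split_ifs
  · exact hpair a b
  · simp

end edgeEnergy

theorem magLap_zero_eq_lapMatrix {n : ℕ} (G : SimpleGraph (Fin n)) [DecidableRel G.Adj] :
    magLap G (fun _ _ => 0) = G.lapMatrix ℂ := by
  ext a b
  by_cases hab : a = b
  · subst hab
    simp [magLap, lapMatrix, degMatrix, Set.ncard_eq_toFinset_card', degree, neighborFinset]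
  · by_cases hadj : G.Adj a b <;> simp [magLap, lapMatrix, degMatrix, hab, hadj]

section perfectMatching

variable {V : Type*} [Fintype V] {G : SimpleGraph V} {M : G.Subgraph}

theorem card_edgeFinset_add_card_edgeFinset_sdiff [DecidableEq V] {H : SimpleGraph V}
    [DecidableRel G.Adj] [DecidableRel H.Adj] (hHG : H ≤ G) :
    #H.edgeFinset + #(G \ H).edgeFinset = #G.edgeFinset := by
  rw [edgeFinset_sdiff, add_comm]
  exact card_sdiff_add_card_eq_card (edgeFinset_subset_edgeFinset.mpr hHG)

theorem IsRegularOfDegree.two_mul_card_edgeFinset {H : SimpleGraph V} [DecidableRel H.Adj]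
    {d : ℕ} (h : H.IsRegularOfDegree d) : 2 * #H.edgeFinset = Fintype.card V * d := by
  rw [← sum_degrees_eq_twice_card_edges]
  simp [h.degree_eq]

theorem Subgraph.IsPerfectMatching.isRegularOfDegree_one_spanningCoe
    [DecidableRel M.spanningCoe.Adj] (hM : M.IsPerfectMatching) :
    M.spanningCoe.IsRegularOfDegree 1 := fun v => by
  obtain ⟨w, hw, huniq⟩ := Subgraph.isPerfectMatching_iff.mp hM v
  rw [← card_neighborFinset_eq_degree, card_eq_one]
  exact ⟨w, Finset.ext fun u => by simpa using ⟨fun h => huniq u h, fun h => h ▸ hw⟩⟩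

variable [DecidableEq V] [DecidableRel G.Adj] [DecidableRel M.spanningCoe.Adj]

theorem Subgraph.IsPerfectMatching.two_mul_re_lapMatrix_sub (hM : M.IsPerfectMatching)
    (x : V → ℂ) :
    2 * ((star x ⬝ᵥ G.lapMatrix ℂ *ᵥ x).re - 2 * (star x ⬝ᵥ x).re) =
      (G \ M.spanningCoe).edgeEnergy 1 x - M.spanningCoe.edgeEnergy (-1) x := by
  have hnorm : (star x ⬝ᵥ x).re = ∑ a, Complex.normSq (x a) := by
    simp [dotProduct, Complex.re_sum, Complex.normSq_apply]
  have hM4 := edgeEnergy_one_add_edgeEnergy_neg_one (G := M.spanningCoe) x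
  simp only [hM.isRegularOfDegree_one_spanningCoe.degree_eq, Nat.cast_one, one_mul] at hM4
  rw [mul_sub, two_mul_re_dotProduct_lapMatrix_mulVec,
    edgeEnergy_eq_add_sdiff M.spanningCoe_le, hnorm]
  linarith

end perfectMatching

variable {n : ℕ} {G : SimpleGraph (Fin n)} [DecidableRel G.Adj] {M : G.Subgraph}
  [DecidableRel M.spanningCoe.Adj] (hA : (magLap G fun _ _ => 0).IsHermitian)

theorem Connected.card_sub_card_edgeFinset_sdiff_le_card_eigenvalues_lt_two (hG : G.Connected)
    (hM : M.IsPerfectMatching) :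
    n - #(G \ M.spanningCoe).edgeFinset ≤ #{i | hA.eigenvalues i < 2} + 1 := by
  have hdim := card_sub_card_edgeFinset_le_finrank_edgeConstraint (G \ M.spanningCoe)
    (one_mul (1 : ℂ))
  have hZ := hG.finrank_edgeConstraint_sdiff_inf_le_one (H := M.spanningCoe) (1 : ℂ) (-1)
  have hcount := hA.finrank_le_card_eigenvalues_lt_add 2 ((G \ M.spanningCoe).edgeConstraint 1)
    ((G \ M.spanningCoe).edgeConstraint 1 ⊓ M.spanningCoe.edgeConstraint (-1))
    (fun x hx => by
      have := hM.two_mul_re_lapMatrix_sub x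
      rw [edgeEnergy_eq_zero_iff.mpr hx] at this
      simp only [RCLike.re_to_complex, magLap_zero_eq_lapMatrix]
      linarith [edgeEnergy_nonneg (G := M.spanningCoe) (-1) x])
    (fun x hx heq => Submodule.mem_inf.mpr ⟨hx, edgeEnergy_eq_zero_iff.mp (by
      have := hM.two_mul_re_lapMatrix_sub x
      rw [edgeEnergy_eq_zero_iff.mpr hx] at this
      simp only [RCLike.re_to_complex, magLap_zero_eq_lapMatrix] at heq
      linarith)⟩)
  rw [Fintype.card_fin] at hdim
  omega

theorem Connected.card_sub_card_edgeFinset_le_card_two_lt_eigenvalues (hG : G.Connected)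
    (hM : M.IsPerfectMatching) :
    n - #M.spanningCoe.edgeFinset ≤ #{i | 2 < hA.eigenvalues i} + 1 := by
  have hdim := card_sub_card_edgeFinset_le_finrank_edgeConstraint M.spanningCoe
    (show (-1 : ℂ) * -1 = 1 by norm_num)
  have hZ := hG.finrank_edgeConstraint_sdiff_inf_le_one (H := M.spanningCoe) (1 : ℂ) (-1)
  have hcount := hA.finrank_le_card_lt_eigenvalues_add 2 (M.spanningCoe.edgeConstraint (-1))
    ((G \ M.spanningCoe).edgeConstraint 1 ⊓ M.spanningCoe.edgeConstraint (-1))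
    (fun x hx => by
      have := hM.two_mul_re_lapMatrix_sub x
      rw [edgeEnergy_eq_zero_iff.mpr hx] at this
      simp only [RCLike.re_to_complex, magLap_zero_eq_lapMatrix]
      linarith [edgeEnergy_nonneg (G := G \ M.spanningCoe) 1 x])
    (fun x hx heq => Submodule.mem_inf.mpr ⟨edgeEnergy_eq_zero_iff.mp (by
      have := hM.two_mul_re_lapMatrix_sub x
      rw [edgeEnergy_eq_zero_iff.mpr hx] at this
      simp only [RCLike.re_to_complex, magLap_zero_eq_lapMatrix] at heq
      linarith), hx⟩)
  rw [Fintype.card_fin] at hdim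
  omega

end SimpleGraph

/-- A tree on `n` vertices with a perfect matching has `n` even and
`λ_{n/2}(Δ^T) < 2 < λ_{n/2+2}(Δ^T)` for the combinatorial Laplacian. -/
theorem matchable_tree_strict_bounds {n : ℕ} (T : SimpleGraph (Fin n)) (hT : T.IsTree)
    (hM : ∃ M : T.Subgraph, M.IsPerfectMatching) :
    Even n ∧
      lamb (magLap_isHermitian T (fun _ _ => (0 : ℝ)) (fun _ _ => neg_zero.symm)) (n / 2) < ((2 : ℝ) : EReal) ∧
      ((2 : ℝ) : EReal) < lamb (magLap_isHermitian T (fun _ _ => (0 : ℝ)) (fun _ _ => neg_zero.symm)) (n / 2 + 2) := by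
  classical
  obtain ⟨M, hM⟩ := hM
  set hA := magLap_isHermitian T (fun _ _ => (0 : ℝ)) (fun _ _ => neg_zero.symm)
  have hlt := hT.connected.card_sub_card_edgeFinset_sdiff_le_card_eigenvalues_lt_two hA hM
  have hgt := hT.connected.card_sub_card_edgeFinset_le_card_two_lt_eigenvalues hA hM
  have hMcard : 2 * #M.spanningCoe.edgeFinset = n := by
    simpa using hM.isRegularOfDegree_one_spanningCoe.two_mul_card_edgeFinset
  have hTcard := hT.card_edgeFinset
  rw [← SimpleGraph.card_edgeFinset_add_card_edgeFinset_sdiff M.spanningCoe_le,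
    Fintype.card_fin] at hTcard
  exact ⟨⟨#M.spanningCoe.edgeFinset, by omega⟩, lamb_lt_of_le_card hA (by omega),
    lt_lamb_of_le_card hA (by omega)⟩
end

section
/- Let G be a finite simple graph on n vertices with m edges and magnetic potential α. If G contains a Hamiltonian cycle C_n (a cycle visiting every vertex exactly once), and α' denotes the restriction of α to the edges of C_n, then λ_k(Δ_{α'}^{C_n}) ≤ λ_k(Δ_α^G) for all 1 ≤ k ≤ n, and λ_k(Δ_α^G) ≤ λ_{k+m-n}(Δ_{α'}^{C_n}) for all 1 ≤ k ≤ 2n - m. -/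
/-!
Every edge `e = s(a, b)` with `a < b` contributes the rank-one matrix `y_e y_eᴴ`,
`y_e = δ_a - e^{iα(b,a)} δ_b`, to the magnetic Laplacian, so `Δ_α^G = Δ_{α'}^C + ∑ y_e y_eᴴ` over
the `m - n` edges off the cycle. Both inequalities come from one Courant–Fischer count: if some
`x ≠ 0` is orthogonal to the eigenvectors of `S` below index `k` and to those of `T` above index `l`,
and `⟪x, S x⟫ ≤ ⟪x, T x⟫`, then `λ_k(S) ≤ λ_l(T)`. For `S = Δ_{α'}^C`, `T = Δ_α^G`, `l = k` the
quadratic forms are ordered everywhere; for `S = Δ_α^G`, `T = Δ_{α'}^C` they agree on `x ⊥ y_e`, and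
these `k + (m - n) + (n - 1 - l)` linear conditions have a nonzero solution once `k + m - n ≤ l`.
-/

open scoped InnerProductSpace
open Finset Matrix

section Interlacing
open RCLike InnerProductSpace
variable {𝕜 E : Type*} [RCLike 𝕜] [NormedAddCommGroup E] [InnerProductSpace 𝕜 E] {n : ℕ}

structure IsSortedEigenbasis (T : E →ₗ[𝕜] E) (b : OrthonormalBasis (Fin n) 𝕜 E) (μ : Fin n → ℝ) :
    Prop where
  monotone : Monotone μ
  apply_eq : ∀ i, T (b i) = (μ i : 𝕜) • b i

lemma re_inner_map_self_eq_sum {ι : Type*} [Fintype ι] {T : E →ₗ[𝕜] E}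
    {b : OrthonormalBasis ι 𝕜 E} {μ : ι → ℝ} (hb : ∀ i, T (b i) = (μ i : 𝕜) • b i) (x : E) :
    re ⟪x, T x⟫_𝕜 = ∑ i, μ i * ‖⟪b i, x⟫_𝕜‖ ^ 2 := by
  have hTx : T x = ∑ i, ((μ i : 𝕜) * ⟪b i, x⟫_𝕜) • b i := by
    conv_lhs => rw [← b.sum_repr' x]
    simp only [map_sum, map_smul, hb, smul_smul, mul_comm]
  rw [hTx, inner_sum, map_sum]
  refine sum_congr rfl fun i _ => ?_
  rw [inner_smul_right, mul_assoc, ← inner_conj_symm, RCLike.conj_mul, norm_conj]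
  norm_cast

namespace IsSortedEigenbasis
variable {T : E →ₗ[𝕜] E} {b : OrthonormalBasis (Fin n) 𝕜 E} {μ : Fin n → ℝ}

lemma mul_norm_sq_le_re_inner (hb : IsSortedEigenbasis T b μ) {k : Fin n} {x : E}
    (hx : ∀ i < k, ⟪b i, x⟫_𝕜 = 0) : μ k * ‖x‖ ^ 2 ≤ re ⟪x, T x⟫_𝕜 := by
  rw [re_inner_map_self_eq_sum hb.apply_eq, ← b.sum_sq_norm_inner_right, mul_sum]
  refine sum_le_sum fun i _ => ?_
  rcases lt_or_ge i k with h | h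
  · simp [hx i h]
  · exact mul_le_mul_of_nonneg_right (hb.monotone h) (sq_nonneg _)

lemma re_inner_le_mul_norm_sq (hb : IsSortedEigenbasis T b μ) {k : Fin n} {x : E}
    (hx : ∀ i, k < i → ⟪b i, x⟫_𝕜 = 0) : re ⟪x, T x⟫_𝕜 ≤ μ k * ‖x‖ ^ 2 := by
  rw [re_inner_map_self_eq_sum hb.apply_eq, ← b.sum_sq_norm_inner_right, mul_sum]
  refine sum_le_sum fun i _ => ?_
  rcases lt_or_ge k i with h | h
  · simp [hx i h]
  · exact mul_le_mul_of_nonneg_right (hb.monotone h) (sq_nonneg _)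

end IsSortedEigenbasis

lemma exists_ne_zero_forall_inner_eq_zero [FiniteDimensional 𝕜 E] {ι : Type*} [Fintype ι]
    (v : ι → E) (h : Fintype.card ι < Module.finrank 𝕜 E) :
    ∃ x ≠ 0, ∀ j, ⟪v j, x⟫_𝕜 = 0 := by
  have hker := LinearMap.ker_ne_bot_of_finrank_lt
    (f := LinearMap.pi fun j => innerₛₗ 𝕜 (v j)) (by simpa using h)
  obtain ⟨x, hx, hx0⟩ := Submodule.exists_mem_ne_zero_of_ne_bot hker
  exact ⟨x, hx0, fun j => congrFun (LinearMap.mem_ker.1 hx) j⟩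

theorem IsSortedEigenbasis.le_of_re_inner_le {S T : E →ₗ[𝕜] E}
    {b c : OrthonormalBasis (Fin n) 𝕜 E} {μ ν : Fin n → ℝ}
    (hS : IsSortedEigenbasis S b μ) (hT : IsSortedEigenbasis T c ν) {ι : Type*} (y : ι → E)
    (s : Finset ι) (hST : ∀ x, (∀ j ∈ s, ⟪y j, x⟫_𝕜 = 0) → re ⟪x, S x⟫_𝕜 ≤ re ⟪x, T x⟫_𝕜)
    {k l : Fin n} (hkl : (k : ℕ) + #s ≤ l) : μ k ≤ ν l := by
  have : FiniteDimensional 𝕜 E := b.toBasis.finiteDimensional_of_finite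
  have hcard : Fintype.card (Iio k ⊕ s ⊕ Ioi l) < Module.finrank 𝕜 E := by
    rw [Module.finrank_eq_card_basis b.toBasis]
    simp only [Fintype.card_sum, Fintype.card_coe, Fin.card_Iio, Fin.card_Ioi, Fintype.card_fin]
    omega
  obtain ⟨x, hx0, hx⟩ := exists_ne_zero_forall_inner_eq_zero
    (Sum.elim (fun i : Iio k => b i) (Sum.elim (fun j : s => y j) fun i : Ioi l => c i))
    hcard
  have hS_le := hS.mul_norm_sq_le_re_inner fun i hi => hx (.inl ⟨i, mem_Iio.2 hi⟩)
  have hT_le := hT.re_inner_le_mul_norm_sq fun i hi => hx (.inr (.inr ⟨i, mem_Ioi.2 hi⟩))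
  have hST_le := hST x fun j hj => hx (.inr (.inl ⟨j, hj⟩))
  exact le_of_mul_le_mul_right (hS_le.trans (hST_le.trans hT_le)) (by positivity)

lemma re_inner_rankOne_self_apply (y x : E) : re ⟪x, rankOne 𝕜 y y x⟫_𝕜 = ‖⟪y, x⟫_𝕜‖ ^ 2 := by
  rw [rankOne_apply, inner_smul_right, ← inner_conj_symm, RCLike.conj_mul, norm_conj]
  norm_cast

lemma toEuclideanLin_vecMulVec_self (y : EuclideanSpace 𝕜 (Fin n)) :
    toEuclideanLin (vecMulVec y (star y)) = rankOne 𝕜 y y := by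
  rw [← symm_toEuclideanLin_rankOne, LinearEquiv.apply_symm_apply]

variable {A B : Matrix (Fin n) (Fin n) 𝕜}

noncomputable def sortedEigenvalues (hA : A.IsHermitian) : Fin n → ℝ :=
  hA.eigenvalues ∘ Tuple.sort hA.eigenvalues

lemma isSortedEigenbasis_sortedEigenvalues (hA : A.IsHermitian) :
    IsSortedEigenbasis (toEuclideanLin A)
      (hA.eigenvectorBasis.reindex (Tuple.sort hA.eigenvalues).symm) (sortedEigenvalues hA) where
  monotone := Tuple.monotone_sort _
  apply_eq i := by
    rw [OrthonormalBasis.reindex_apply, Equiv.symm_symm, toLpLin_apply,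
      hA.mulVec_eigenvectorBasis, ← real_smul_eq_coe_smul (K := 𝕜)]
    rfl

theorem sortedEigenvalues_interlace (hA : A.IsHermitian) (hB : B.IsHermitian) {ι : Type*}
    (s : Finset ι) (y : ι → EuclideanSpace 𝕜 (Fin n))
    (hAB : B = A + ∑ j ∈ s, vecMulVec (y j) (star (y j))) :
    (∀ k, sortedEigenvalues hA k ≤ sortedEigenvalues hB k) ∧
      ∀ k l : Fin n, (k : ℕ) + #s ≤ l → sortedEigenvalues hB k ≤ sortedEigenvalues hA l := by
  have hquad : ∀ x, re ⟪x, toEuclideanLin B x⟫_𝕜 =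
      re ⟪x, toEuclideanLin A x⟫_𝕜 + ∑ j ∈ s, ‖⟪y j, x⟫_𝕜‖ ^ 2 := fun x => by
    simp only [hAB, map_add, map_sum, toEuclideanLin_vecMulVec_self, LinearMap.add_apply,
      LinearMap.sum_apply, ContinuousLinearMap.coe_coe, inner_add_right, inner_sum,
      re_inner_rankOne_self_apply]
  refine ⟨fun k => ?_, fun k l hkl => ?_⟩
  · refine (isSortedEigenbasis_sortedEigenvalues hA).le_of_re_inner_le
      (isSortedEigenbasis_sortedEigenvalues hB) y ∅ (fun x _ => ?_) (by simp)
    rw [hquad]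
    exact le_add_of_nonneg_right (sum_nonneg fun j _ => sq_nonneg _)
  · refine (isSortedEigenbasis_sortedEigenvalues hB).le_of_re_inner_le
      (isSortedEigenbasis_sortedEigenvalues hA) y s (fun x hx => ?_) hkl
    rw [hquad, sum_eq_zero fun j hj => by rw [hx j hj, norm_zero, sq, zero_mul], add_zero]

end Interlacing

lemma lamb_val_add_one {n : ℕ} {A : Matrix (Fin n) (Fin n) ℂ} (hA : A.IsHermitian) (k : Fin n) :
    lamb hA (k + 1) = sortedEigenvalues hA k := by
  rw [lamb, dif_pos ⟨by omega, k.isLt⟩]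
  simp [sortedEigenvalues]

section MagneticLaplacian
open Complex SimpleGraph
variable {n : ℕ} (α : Fin n → Fin n → ℝ)

/-- The orientation from `e.inf` to `e.sup` is arbitrary: for antisymmetric `α` the outer
product `y yᴴ` does not depend on it. -/
noncomputable def edgeVector (e : Sym2 (Fin n)) : EuclideanSpace ℂ (Fin n) :=
  EuclideanSpace.single e.inf 1 - EuclideanSpace.single e.sup (exp (α e.sup e.inf * I))

variable {α}

lemma vecMulVec_edgeVector_apply_of_lt (hα : ∀ u v, α v u = -α u v) {a b : Fin n} (hab : a < b)
    (u w : Fin n) :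
    vecMulVec (edgeVector α s(a, b)) (star (edgeVector α s(a, b))) u w =
      if u = w then (if u ∈ s(a, b) then 1 else 0)
      else if s(u, w) = s(a, b) then -exp (α u w * I) else 0 := by
  have hconj : ∀ θ : ℝ, (starRingEnd ℂ) (exp (θ * I)) = exp ((-θ : ℝ) * I) := fun θ => by
    rw [← exp_conj]; simp
  simp only [Sym2.mem_iff, Sym2.eq_iff, edgeVector, Sym2.inf_mk, Sym2.sup_mk,
    inf_of_le_left hab.le, sup_of_le_right hab.le, vecMulVec_apply, PiLp.sub_apply,
    PiLp.single_apply, Pi.star_apply]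
  rcases eq_or_ne u a with rfl | hua <;> rcases eq_or_ne w u with rfl | hwu
  · simp [hab.ne]
  · rcases eq_or_ne w b with rfl | hwb
    · simp [hab.ne, hab.ne', hconj, ← hα]
    · simp [hwu, hwu.symm, hwb, hab.ne]
  · rcases eq_or_ne w b with rfl | hwb
    · simp [hua, hconj, ← exp_add]
    · simp [hua, hwb]
  · rcases eq_or_ne u b with rfl | hub
    · rcases eq_or_ne w a with rfl | hwa
      · simp [hab.ne, hab.ne']
      · simp [hua, hwa, hwu, hwu.symm]
    · simp [hua, hub, hwu.symm]

lemma vecMulVec_edgeVector_apply (hα : ∀ u v, α v u = -α u v) {e : Sym2 (Fin n)}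
    (he : ¬ e.IsDiag) (u w : Fin n) :
    vecMulVec (edgeVector α e) (star (edgeVector α e)) u w =
      if u = w then (if u ∈ e then 1 else 0)
      else if s(u, w) = e then -exp (α u w * I) else 0 := by
  induction e using Sym2.ind with | _ a b
  rcases lt_trichotomy a b with hab | rfl | hba
  · exact vecMulVec_edgeVector_apply_of_lt hα hab u w
  · exact absurd (Sym2.mk_isDiag_iff.2 rfl) he
  · rw [Sym2.eq_swap]
    exact vecMulVec_edgeVector_apply_of_lt hα hba u w

theorem magLap_eq_sum_edgeVector (hα : ∀ u v, α v u = -α u v) (G : SimpleGraph (Fin n))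
    [Fintype G.edgeSet] :
    magLap G α = ∑ e ∈ G.edgeFinset, vecMulVec (edgeVector α e) (star (edgeVector α e)) := by
  classical
  ext u w
  rw [Matrix.sum_apply, sum_congr rfl fun e he => vecMulVec_edgeVector_apply hα
    (G.not_isDiag_of_mem_edgeSet (mem_edgeFinset.1 he)) u w]
  simp only [magLap, of_apply]
  split_ifs with huw hadj
  · subst huw
    simp [← incidenceFinset_eq_filter, Set.ncard_eq_toFinset_card', Set.toFinset_card,
      ← neighborFinset_eq_filter]
  · simp [hadj]
  · simp [hadj]

theorem magLap_eq_add_sum_sdiff (hα : ∀ u v, α v u = -α u v) {G H : SimpleGraph (Fin n)}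
    [Fintype G.edgeSet] [Fintype H.edgeSet] (hHG : H ≤ G) :
    magLap G α = magLap H α + ∑ e ∈ G.edgeFinset \ H.edgeFinset,
      vecMulVec (edgeVector α e) (star (edgeVector α e)) := by
  rw [magLap_eq_sum_edgeVector hα, magLap_eq_sum_edgeVector hα,
    ← sum_sdiff (edgeFinset_mono hHG), add_comm]

end MagneticLaplacian

namespace SimpleGraph.Walk
variable {V : Type*} {G : SimpleGraph V} {v : V}

lemma fromEdgeSet_edges_le {u : V} (p : G.Walk u v) : fromEdgeSet {e | e ∈ p.edges} ≤ G :=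
  G.fromEdgeSet_le.2 fun _ he => p.edges_subset_edgeSet he.1

lemma IsHamiltonianCycle.card_edgeFinset_fromEdgeSet [Fintype V] [DecidableEq V] {p : G.Walk v v}
    (hp : p.IsHamiltonianCycle) [Fintype (fromEdgeSet {e | e ∈ p.edges}).edgeSet] :
    #(fromEdgeSet {e | e ∈ p.edges}).edgeFinset = Fintype.card V := by
  have hedges : (fromEdgeSet {e | e ∈ p.edges}).edgeFinset = p.edges.toFinset := by
    ext e
    simpa using fun he => G.not_isDiag_of_mem_edgeSet (p.edges_subset_edgeSet he)
  rw [hedges, List.toFinset_card_of_nodup hp.isCycle.edges_nodup, p.length_edges, hp.length_eq]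

end SimpleGraph.Walk

/-- If `G` on `n` vertices with `m` edges contains a Hamiltonian
cycle and `C` denotes the spanning subgraph given by the edges of that cycle (carrying
the restricted magnetic potential), then `λ_k(Δ_{α'}^{C}) ≤ λ_k(Δ_α^G)` for
`1 ≤ k ≤ n` and `λ_k(Δ_α^G) ≤ λ_{k+m-n}(Δ_{α'}^{C})` for `1 ≤ k ≤ 2n-m`. -/
theorem hamiltonian_cycle_interlacing {n m : ℕ} (G : SimpleGraph (Fin n))
    (hm : G.edgeSet.ncard = m)
    (α : Fin n → Fin n → ℝ) (hα : ∀ u v, α v u = -α u v)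
    (v : Fin n) (p : G.Walk v v) (hp : p.IsHamiltonianCycle) :
    (∀ k : ℕ, 1 ≤ k → k ≤ n →
      lamb (magLap_isHermitian (SimpleGraph.fromEdgeSet {e | e ∈ p.edges}) α hα) k ≤
        lamb (magLap_isHermitian G α hα) k) ∧
    (∀ k : ℕ, 1 ≤ k → k ≤ 2 * n - m →
      lamb (magLap_isHermitian G α hα) k ≤
        lamb (magLap_isHermitian (SimpleGraph.fromEdgeSet {e | e ∈ p.edges}) α hα)
          (k + m - n)) := by
  classical
  set C := SimpleGraph.fromEdgeSet {e | e ∈ p.edges}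
  have hCG : C ≤ G := p.fromEdgeSet_edges_le
  have hsub := SimpleGraph.edgeFinset_mono hCG
  have hCn : #C.edgeFinset = n := by rw [hp.card_edgeFinset_fromEdgeSet, Fintype.card_fin]
  have hGm : #G.edgeFinset = m := by
    rw [← hm, ← SimpleGraph.coe_edgeFinset, Set.ncard_coe_finset]
  have hnm : n ≤ m := hCn ▸ hGm ▸ card_le_card hsub
  obtain ⟨hlow, hhigh⟩ := sortedEigenvalues_interlace (magLap_isHermitian C α hα)
    (magLap_isHermitian G α hα) _ _ (magLap_eq_add_sum_sdiff hα hCG)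
  refine ⟨fun k hk hkn => ?_, fun k hk hkm => ?_⟩
  · obtain ⟨i, rfl⟩ : ∃ i : Fin n, k = i + 1 := ⟨⟨k - 1, by omega⟩, by dsimp only; omega⟩
    rw [lamb_val_add_one, lamb_val_add_one]
    exact EReal.coe_le_coe (hlow i)
  · obtain ⟨i, rfl⟩ : ∃ i : Fin n, k = i + 1 := ⟨⟨k - 1, by omega⟩, by dsimp only; omega⟩
    obtain ⟨j, hj⟩ : ∃ j : Fin n, (i : ℕ) + 1 + m - n = j + 1 :=
      ⟨⟨i + m - n, by omega⟩, by dsimp only; omega⟩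
    rw [hj, lamb_val_add_one, lamb_val_add_one]
    exact EReal.coe_le_coe (hhigh i j (by rw [card_sdiff_of_subset hsub, hGm, hCn]; omega))
end
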